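/- arXiv:1310.1615 — 5 statements merged into one kernel-verified Lean document; each statement's English description precedes it below -/
import Mathlib

section
/- Let (M, Σ, μ, T) be a measure-preserving dynamical system on a metric space (M, d) whose σ-algebra contains all open balls. Suppose T is continuous at a point x ∈ M, every open ball around x has positive measure, and there exists a measurable set D with μ(D) > 0 and inf{d(T(x), m) : m ∈ D} > 0. Then there exists ε > 0 such that (M, Σ, μ, T) is not ε-congruent to (the deterministic representation of) any Bernoulli process with finitely many outcomes taking values in M. -/
open MeasureTheory Set
open scoped ENNReal

/-- `φ` is an isomorphism of measure-preserving systems `(μ, T)` and `(ν, S)`: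
a bi-measurable measure-preserving bijection between full-measure forward-invariant
subsets intertwining the dynamics. -/
def IsIso {M Ω : Type*} [MeasurableSpace M] [MeasurableSpace Ω]
    (μ : Measure M) (ν : Measure Ω) (T : M → M) (S : Ω → Ω) (φ : M → Ω) : Prop :=
  ∃ (Mh : Set M) (Ωh : Set Ω), MeasurableSet Mh ∧ MeasurableSet Ωh ∧
    μ Mhᶜ = 0 ∧ ν Ωhᶜ = 0 ∧ Set.MapsTo T Mh Mh ∧ Set.MapsTo S Ωh Ωh ∧
    Set.BijOn φ Mh Ωh ∧
    (∀ A : Set M, MeasurableSet A → A ⊆ Mh → MeasurableSet (φ '' A) ∧ ν (φ '' A) = μ A) ∧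
    (∀ B : Set Ω, MeasurableSet B → B ⊆ Ωh → MeasurableSet (Mh ∩ φ ⁻¹' B)) ∧
    (∀ m ∈ Mh, φ (T m) = S (φ m))

theorem stmt11 {M : Type*} [MetricSpace M] [MeasurableSpace M]
    (μ : Measure M) [IsProbabilityMeasure μ]
    (hballs : ∀ (x : M) (r : ℝ), MeasurableSet (Metric.ball x r))
    (T : M → M) (hTbij : Function.Bijective T) (hTmeas : Measurable T)
    (hTpres : ∀ A : Set M, MeasurableSet A → μ (T '' A) = μ A)
    (x : M) (hcont : ContinuousAt T x)
    (hx : ∀ r : ℝ, 0 < r → 0 < μ (Metric.ball x r))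
    (D : Set M) (hD : MeasurableSet D) (hDpos : 0 < μ D)
    (hDdist : 0 < Metric.infDist (T x) D) :
    ∃ ε : ℝ, 0 < ε ∧
      ¬ ∃ (N : ℕ) (s : Fin N → M) (p : Fin N → ℝ≥0∞) (ν : Measure (ℤ → Fin N))
          (_ : IsProbabilityMeasure ν) (φ : M → (ℤ → Fin N)),
        0 < N ∧ (∑ k, p k = 1) ∧
        (∀ (F : Finset ℤ) (a : ℤ → Fin N),
          ν {ω | ∀ i ∈ F, ω i = a i} = ∏ i ∈ F, p (a i)) ∧
        IsIso μ ν T (fun ω t => ω (t + 1)) φ ∧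
        μ {m : M | ε ≤ dist m (s (φ m 0))} < ENNReal.ofReal ε := by
  classical
  set r := Metric.infDist (T x) D with hr
  obtain ⟨δ, hδpos, hδ⟩ := Metric.continuousAt_iff.mp hcont (r / 2) (by linarith)
  set b := (μ (Metric.ball x (δ / 4))).toReal with hbdef
  have hbpos : 0 < b :=
    ENNReal.toReal_pos (hx _ (by linarith)).ne' (measure_ne_top μ _)
  set dD := (μ D).toReal with hdDdef
  have hdDpos : 0 < dD := ENNReal.toReal_pos hDpos.ne' (measure_ne_top μ _)
  set ε := min (min (δ / 4) (r / 8)) (min (min (b / 2) (dD / 2)) (b * dD / 8)) with hεdef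
  have hεpos : 0 < ε := by
    simp only [hεdef, lt_min_iff]
    refine ⟨⟨by linarith, by linarith⟩, ⟨by linarith, by linarith⟩, by positivity⟩
  have hε1 : ε ≤ δ / 4 := le_trans (min_le_left _ _) (min_le_left _ _)
  have hε2 : ε ≤ r / 8 := le_trans (min_le_left _ _) (min_le_right _ _)
  have hε3 : ε ≤ b / 2 :=
    le_trans (min_le_right _ _) (le_trans (min_le_left _ _) (min_le_left _ _))
  have hε4 : ε ≤ dD / 2 :=
    le_trans (min_le_right _ _) (le_trans (min_le_left _ _) (min_le_right _ _))
  have hε5 : ε ≤ b * dD / 8 := le_trans (min_le_right _ _) (min_le_right _ _)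
  refine ⟨ε, hεpos, ?_⟩
  rintro ⟨N, s, p, ν, hνprob, φ, hN, hsum, hcyl,
    ⟨Mh, Ωh, hMh, hΩh, hMhc, hΩhc, hTMh, hSΩh, hbij, hpush, hpull, hcomm⟩, hsmall⟩
  -- the bad set and its measurable hull
  set bad := {m : M | ε ≤ dist m (s (φ m 0))} with hbaddef
  set Bad := toMeasurable μ bad with hBaddef
  have hBadm : MeasurableSet Bad := measurableSet_toMeasurable μ bad
  have hBadμ : μ Bad < ENNReal.ofReal ε := by
    rw [hBaddef, measure_toMeasurable]; exact hsmall
  have hTBadμ : μ (T ⁻¹' Bad) = μ Bad := by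
    have h := hTpres (T ⁻¹' Bad) (hTmeas hBadm)
    rw [Set.image_preimage_eq _ hTbij.surjective] at h
    exact h.symm
  have hnotbad : ∀ m, m ∉ Bad → dist m (s (φ m 0)) < ε := by
    intro m hm
    by_contra h
    exact hm (subset_toMeasurable μ bad (le_of_not_gt h))
  -- symbol classes
  set I : Finset (Fin N) := Finset.univ.filter (fun i => dist (s i) x < δ / 2) with hIdef
  set J : Finset (Fin N) := Finset.univ.filter (fun j => Metric.infDist (s j) D ≤ ε) with hJdef
  -- basic cylinder measures
  have hm0 : ∀ (t : ℤ) (i : Fin N), MeasurableSet {ω : ℤ → Fin N | ω t = i} := by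
    intro t i
    have heq : {ω : ℤ → Fin N | ω t = i} = (fun ω : ℤ → Fin N => ω t) ⁻¹' {i} := by ext; simp
    rw [heq]
    exact measurable_pi_apply t (measurableSet_singleton i)
  have hone : ∀ i : Fin N, ν {ω : ℤ → Fin N | ω 0 = i} = p i := by
    intro i
    have h := hcyl {0} (fun _ => i)
    simpa using h
  have htwo : ∀ i j : Fin N, ν {ω : ℤ → Fin N | ω 0 = i ∧ ω 1 = j} = p i * p j := by
    intro i j
    have h := hcyl ({0, 1} : Finset ℤ) (fun t => if t = 0 then i else j)
    have hset : {ω : ℤ → Fin N | ∀ t ∈ ({0, 1} : Finset ℤ), ω t = if t = 0 then i else j}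
        = {ω : ℤ → Fin N | ω 0 = i ∧ ω 1 = j} := by
      ext ω
      simp [Finset.mem_insert]
    have hprod : (∏ t ∈ ({0, 1} : Finset ℤ), p (if t = 0 then i else j)) = p i * p j := by
      rw [Finset.prod_pair (by norm_num : (0 : ℤ) ≠ 1)]
      norm_num
    rw [hset, hprod] at h
    exact h
  -- measure of the events
  have hKset : ∀ K : Finset (Fin N),
      {ω : ℤ → Fin N | ω 0 ∈ K} = ⋃ i ∈ K, {ω : ℤ → Fin N | ω 0 = i} := by
    intro K; ext ω; simp
  have hKmeas : ∀ K : Finset (Fin N), ν {ω : ℤ → Fin N | ω 0 ∈ K} = ∑ i ∈ K, p i := by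
    intro K
    rw [hKset K, measure_biUnion_finset ?_ (fun i _ => hm0 0 i)]
    · exact Finset.sum_congr rfl fun i _ => hone i
    · intro i _ j _ hij
      refine Set.disjoint_left.mpr fun ω h1 h2 => hij ?_
      exact h1.symm.trans h2
  set E01 := {ω : ℤ → Fin N | ω 0 ∈ I ∧ ω 1 ∈ J} with hE01def
  have hE01set : E01 = ⋃ q ∈ I ×ˢ J, {ω : ℤ → Fin N | ω 0 = q.1 ∧ ω 1 = q.2} := by
    ext ω; simp [hE01def]
  have hcylm : ∀ q : Fin N × Fin N,
      MeasurableSet {ω : ℤ → Fin N | ω 0 = q.1 ∧ ω 1 = q.2} := by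
    intro q
    exact (hm0 0 q.1).inter (hm0 1 q.2)
  have hE01m : MeasurableSet E01 := by
    rw [hE01set]
    exact (I ×ˢ J).measurableSet_biUnion fun q _ => hcylm q
  have hE01ν : ν E01 = (∑ i ∈ I, p i) * (∑ j ∈ J, p j) := by
    rw [hE01set, measure_biUnion_finset ?_ (fun q _ => hcylm q)]
    · rw [Finset.sum_mul_sum]
      rw [Finset.sum_product]
      exact Finset.sum_congr rfl fun i _ => Finset.sum_congr rfl fun j _ => htwo i j
    · intro q _ q' _ hqq'
      refine Set.disjoint_left.mpr fun ω h1 h2 => hqq' ?_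
      exact Prod.ext (h1.1.symm.trans h2.1) (h1.2.symm.trans h2.2)
  -- lower bound on ∑_I p
  have hGImeas : MeasurableSet (Metric.ball x (δ / 4) ∩ (Badᶜ ∩ Mh)) :=
    (hballs x (δ / 4)).inter (hBadm.compl.inter hMh)
  have hGIsubMh : Metric.ball x (δ / 4) ∩ (Badᶜ ∩ Mh) ⊆ Mh := fun m hm => hm.2.2
  have hGIsub : φ '' (Metric.ball x (δ / 4) ∩ (Badᶜ ∩ Mh)) ⊆ {ω : ℤ → Fin N | ω 0 ∈ I} := by
    rintro _ ⟨m, ⟨hball, hnb, _⟩, rfl⟩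
    have h1 := hnotbad m hnb
    have h2 : dist m x < δ / 4 := Metric.mem_ball.mp hball
    have : dist (s (φ m 0)) x < δ / 2 := by
      have := dist_triangle (s (φ m 0)) m x
      rw [dist_comm (s (φ m 0)) m] at this
      linarith
    simp only [Set.mem_setOf_eq, hIdef, Finset.mem_filter, Finset.mem_univ, true_and]
    exact this
  have hlb : ∀ (G : Set M), MeasurableSet G → G ⊆ Mh → ∀ E : Set (ℤ → Fin N),
      φ '' G ⊆ E → μ G ≤ ν E := by
    intro G hGm hGMh E hsub
    rw [← (hpush G hGm hGMh).2]
    exact measure_mono hsub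
  have hcover : ∀ (W : Set M), W ⊆ (W ∩ (Badᶜ ∩ Mh)) ∪ Bad ∪ Mhᶜ := by
    intro W m hm
    by_cases h1 : m ∈ Bad
    · exact Or.inl (Or.inr h1)
    by_cases h2 : m ∈ Mh
    · exact Or.inl (Or.inl ⟨hm, h1, h2⟩)
    · exact Or.inr h2
  have hmeaslb : ∀ (W : Set M), ENNReal.ofReal (μ W).toReal - ENNReal.ofReal ε
      ≤ μ (W ∩ (Badᶜ ∩ Mh)) := by
    intro W
    have h1 : μ W ≤ μ (W ∩ (Badᶜ ∩ Mh)) + μ Bad + μ Mhᶜ :=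
      le_trans (measure_mono (hcover W))
        (le_trans (measure_union_le _ _) (add_le_add (measure_union_le _ _) le_rfl))
    rw [hMhc, add_zero] at h1
    have h2 : μ W ≤ μ (W ∩ (Badᶜ ∩ Mh)) + ENNReal.ofReal ε :=
      le_trans h1 (add_le_add le_rfl hBadμ.le)
    rw [ENNReal.ofReal_toReal (measure_ne_top μ W)]
    exact tsub_le_iff_right.mpr h2
  have hIlb : ENNReal.ofReal (b / 2) ≤ ∑ i ∈ I, p i := by
    rw [← hKmeas I]
    refine le_trans ?_ (le_trans (hmeaslb (Metric.ball x (δ / 4)))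
      (hlb _ hGImeas hGIsubMh _ hGIsub))
    rw [← hbdef, ← ENNReal.ofReal_sub _ hεpos.le]
    exact ENNReal.ofReal_le_ofReal (by linarith)
  -- lower bound on ∑_J p
  have hGDmeas : MeasurableSet (D ∩ (Badᶜ ∩ Mh)) := hD.inter (hBadm.compl.inter hMh)
  have hGDsubMh : D ∩ (Badᶜ ∩ Mh) ⊆ Mh := fun m hm => hm.2.2
  have hGDsub : φ '' (D ∩ (Badᶜ ∩ Mh)) ⊆ {ω : ℤ → Fin N | ω 0 ∈ J} := by
    rintro _ ⟨m, ⟨hmD, hnb, _⟩, rfl⟩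
    have h1 := hnotbad m hnb
    have h2 : Metric.infDist (s (φ m 0)) D ≤ dist (s (φ m 0)) m :=
      Metric.infDist_le_dist_of_mem hmD
    rw [dist_comm] at h2
    simp only [Set.mem_setOf_eq, hJdef, Finset.mem_filter, Finset.mem_univ, true_and]
    linarith
  have hJlb : ENNReal.ofReal (dD / 2) ≤ ∑ j ∈ J, p j := by
    rw [← hKmeas J]
    refine le_trans ?_ (le_trans (hmeaslb D) (hlb _ hGDmeas hGDsubMh _ hGDsub))
    rw [← hdDdef, ← ENNReal.ofReal_sub _ hεpos.le]
    exact ENNReal.ofReal_le_ofReal (by linarith)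
  -- upper bound on ν E01
  set A := Mh ∩ φ ⁻¹' (E01 ∩ Ωh) with hAdef
  have hAm : MeasurableSet A := hpull (E01 ∩ Ωh) (hE01m.inter hΩh) Set.inter_subset_right
  have hAsubMh : A ⊆ Mh := Set.inter_subset_left
  have hφA : φ '' A = E01 ∩ Ωh := by
    apply Set.Subset.antisymm
    · rintro _ ⟨m, ⟨_, hmB⟩, rfl⟩; exact hmB
    · rintro ω ⟨hω1, hω2⟩
      obtain ⟨m, hmMh, rfl⟩ := hbij.surjOn hω2
      exact ⟨m, ⟨hmMh, ⟨hω1, hω2⟩⟩, rfl⟩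
  have hνA : ν E01 ≤ μ A := by
    have h1 : ν E01 ≤ ν (E01 ∩ Ωh) + ν Ωhᶜ := by
      refine le_trans (measure_mono ?_) (measure_union_le _ _)
      intro ω hω
      by_cases h : ω ∈ Ωh
      · exact Or.inl ⟨hω, h⟩
      · exact Or.inr h
    rw [hΩhc, add_zero, ← hφA] at h1
    rw [← (hpush A hAm hAsubMh).2]
    exact h1
  have hAsub : A ⊆ Bad ∪ T ⁻¹' Bad := by
    rintro m ⟨hmMh, ⟨hI0, hJ1⟩, _⟩
    by_contra hcon
    simp only [Set.mem_union, not_or] at hcon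
    obtain ⟨hnb1, hnb2⟩ := hcon
    have h1 : dist m (s (φ m 0)) < ε := hnotbad m hnb1
    have h2 : dist (T m) (s (φ (T m) 0)) < ε := hnotbad (T m) hnb2
    have h3 : φ (T m) 0 = φ m 1 := by
      rw [hcomm m hmMh]
      norm_num
    rw [h3] at h2
    have hI0' : dist (s (φ m 0)) x < δ / 2 := by
      simpa [hIdef] using hI0
    have hJ1' : Metric.infDist (s (φ m 1)) D ≤ ε := by
      simpa [hJdef] using hJ1
    have hmx : dist m x < δ := by
      have := dist_triangle m (s (φ m 0)) x
      linarith
    have hTm : dist (T m) (T x) < r / 2 := hδ hmx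
    have hkey : r ≤ Metric.infDist (s (φ m 1)) D + dist (T x) (s (φ m 1)) :=
      Metric.infDist_le_infDist_add_dist
    have hdist : dist (T x) (s (φ m 1)) ≤ dist (T x) (T m) + dist (T m) (s (φ m 1)) :=
      dist_triangle _ _ _
    rw [dist_comm (T x) (T m)] at hdist
    linarith
  have hμA : μ A < ENNReal.ofReal ε + ENNReal.ofReal ε := by
    refine lt_of_le_of_lt (le_trans (measure_mono hAsub) (measure_union_le _ _)) ?_
    exact ENNReal.add_lt_add hBadμ (hTBadμ.trans_lt hBadμ)
  -- contradiction
  have hfinal : ENNReal.ofReal (b / 2) * ENNReal.ofReal (dD / 2)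
      < ENNReal.ofReal ε + ENNReal.ofReal ε := by
    calc ENNReal.ofReal (b / 2) * ENNReal.ofReal (dD / 2)
        ≤ (∑ i ∈ I, p i) * (∑ j ∈ J, p j) := mul_le_mul' hIlb hJlb
      _ = ν E01 := hE01ν.symm
      _ ≤ μ A := hνA
      _ < _ := hμA
  rw [← ENNReal.ofReal_mul (by linarith), ← ENNReal.ofReal_add hεpos.le hεpos.le] at hfinal
  have hlt : b / 2 * (dD / 2) < ε + ε :=
    (ENNReal.ofReal_lt_ofReal_iff_of_nonneg (by positivity)).mp hfinal
  have heq : b / 2 * (dD / 2) = b * dD / 4 := by ring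
  linarith
end

section
/- Let (M, Σ, μ, T) be a measure-preserving system on a metric space (M, d) whose σ-algebra contains all open balls, with T continuous at a point x, every open ball around x of positive measure, and some set D of positive measure with inf{d(T(x), m) : m ∈ D} > 0. Then there exists ε > 0 such that (M, Σ, μ, T) is not ε-congruent to any generalised Bernoulli process (i.i.d. process with arbitrary, not necessarily finite, outcome space contained in M). -/
/-! If `Φ₀ ∘ φ` stays within `ε` of the identity off a set of measure `< ε`, the time-`0` and
time-`1` observations of the Bernoulli process see the orbit step `m ↦ T m` up to errors of size
`ε`. Near `x` the map `T` moves points into a small ball around `T x`, which `D` avoids; hence the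
event "`ω 0` near `x` and `ω 1` far from `T x`" has probability `O(ε)`. By independence it also has
probability at least about `μ(B(x, r)) μ(D)`, a contradiction for small `ε`. -/

open MeasureTheory Set
open scoped ENNReal

open Metric

theorem measure_preimage_le_of_measure_image {M : Type*} [MeasurableSpace M] {μ : Measure M}
    {T : M → M} (hT : Measurable T) (hTpres : ∀ A : Set M, MeasurableSet A → μ (T '' A) = μ A)
    (s : Set M) : μ (T ⁻¹' s) ≤ μ s :=
  calc μ (T ⁻¹' s) ≤ μ (T ⁻¹' toMeasurable μ s) :=
        measure_mono (preimage_mono (subset_toMeasurable _ _))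
    _ = μ (T '' (T ⁻¹' toMeasurable μ s)) :=
        (hTpres _ (hT (measurableSet_toMeasurable _ _))).symm
    _ ≤ μ (toMeasurable μ s) := measure_mono (image_preimage_subset _ _)
    _ = μ s := measure_toMeasurable s

theorem measureReal_le_preimage_add {M : Type*} [PseudoMetricSpace M] [MeasurableSpace M]
    (μ : Measure M) [IsFiniteMeasure μ] (f : M → M) {ε : ℝ} {s t : Set M}
    (hst : thickening ε s ⊆ t) :
    μ.real s ≤ μ.real (f ⁻¹' t) + μ.real {m | ε ≤ dist m (f m)} := by
  refine (measureReal_mono fun m hm ↦ ?_).trans (measureReal_union_le _ _)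
  by_cases hfar : ε ≤ dist m (f m)
  · exact Or.inr hfar
  · exact Or.inl (hst (mem_thickening_iff.2 ⟨m, hm, by rw [dist_comm]; exact not_le.1 hfar⟩))

theorem thickening_compl_ball_infDist_subset {M : Type*} [PseudoMetricSpace M] (y : M) (s : Set M)
    (ε : ℝ) : thickening ε s ⊆ (ball y (infDist y s - ε))ᶜ := by
  intro z hz hzy
  obtain ⟨w, hw, hzw⟩ := mem_thickening_iff.1 hz
  have := infDist_le_dist_of_mem (x := y) hw
  have := dist_triangle y z w
  rw [mem_ball, dist_comm] at hzy
  linarith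

theorem mem_ball_of_mapsTo_ball {M : Type*} [PseudoMetricSpace M] {T : M → M} {x y z w m : M}
    {r s ε : ℝ} (hT : MapsTo T (ball x r) (ball y s)) (hz : z ∈ ball x (r - ε))
    (hm : dist m z < ε) (hw : dist (T m) w < ε) : w ∈ ball y (s + ε) := by
  rw [mem_ball] at hz ⊢
  have hTm : dist (T m) y < s := hT (by rw [mem_ball]; linarith [dist_triangle m z x])
  linarith [dist_triangle w (T m) y, dist_comm w (T m)]

theorem two_mul_lt_mul_of_le_add {a b p q e : ℝ} (ha : 0 < a) (hb : 0 < b) (ha1 : a ≤ 1)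
    (hb1 : b ≤ 1) (hp : a ≤ p + e) (hq : b ≤ q + e) (he : e < a * b / 8) : 2 * e < p * q := by
  have hp' : 7 * a / 8 < p := by linarith [mul_le_of_le_one_right ha.le hb1]
  have hq' : 7 * b / 8 < q := by linarith [mul_le_of_le_one_left hb.le ha1]
  calc 2 * e < a * b / 4 := by linarith
    _ < (7 * a / 8) * (7 * b / 8) := by nlinarith [mul_pos ha hb]
    _ < p * q := mul_lt_mul'' hp' hq' (by positivity) (by positivity)

namespace IsIso

variable {M Ω : Type*} [MeasurableSpace M] [MeasurableSpace Ω] {μ : Measure M} {ν : Measure Ω}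
  {T : M → M} {S : Ω → Ω} {φ : M → Ω}

theorem measure_preimage (h : IsIso μ ν T S φ) {B : Set Ω} (hB : MeasurableSet B) :
    μ (φ ⁻¹' B) = ν B := by
  obtain ⟨Mh, Ωh, -, hΩh, hMh, hΩhc, -, -, hbij, hpush, hpre, -⟩ := h
  have hA : Mh ∩ φ ⁻¹' (B ∩ Ωh) = φ ⁻¹' B ∩ Mh := by
    ext m
    exact ⟨fun hm ↦ ⟨hm.2.1, hm.1⟩, fun hm ↦ ⟨hm.2, hm.1, hbij.mapsTo hm.2⟩⟩
  have hAm : MeasurableSet (φ ⁻¹' B ∩ Mh) := hA ▸ hpre _ (hB.inter hΩh) inter_subset_right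
  calc μ (φ ⁻¹' B) = μ (φ ⁻¹' B ∩ Mh) := (measure_inter_conull hMh).symm
    _ = ν (φ '' (φ ⁻¹' B ∩ Mh)) := (hpush _ hAm inter_subset_right).2.symm
    _ = ν (B ∩ Ωh) := by rw [inter_comm, image_inter_preimage, hbij.image_eq, inter_comm]
    _ = ν B := measure_inter_conull hΩhc

theorem measureReal_preimage (h : IsIso μ ν T S φ) {B : Set Ω} (hB : MeasurableSet B) :
    μ.real (φ ⁻¹' B) = ν.real B := by
  simp only [measureReal_def, h.measure_preimage hB]

theorem ae_comp_eq (h : IsIso μ ν T S φ) : ∀ᵐ m ∂μ, φ (T m) = S (φ m) := by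
  obtain ⟨Mh, -, -, -, hMh, -, -, -, -, -, -, hcomm⟩ := h
  exact Filter.mem_of_superset (compl_compl Mh ▸ compl_mem_ae_iff.2 hMh) hcomm

end IsIso

def IsIIDLaw {ι M : Type*} [MeasurableSpace M] (ν : Measure (ι → M)) (ρ : Measure M) : Prop :=
  ∀ (F : Finset ι) (A : ι → Set M), (∀ i, MeasurableSet (A i)) →
    ν {ω | ∀ i ∈ F, ω i ∈ A i} = ∏ i ∈ F, ρ (A i)

namespace IsIIDLaw

variable {ι M : Type*} [MeasurableSpace M] {ν : Measure (ι → M)} {ρ : Measure M}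

theorem measure_coord (h : IsIIDLaw ν ρ) (i : ι) {A : Set M} (hA : MeasurableSet A) :
    ν {ω | ω i ∈ A} = ρ A := by
  simpa using h {i} (fun _ ↦ A) fun _ ↦ hA

theorem measure_coord_pair [DecidableEq ι] (h : IsIIDLaw ν ρ) {i j : ι} (hij : i ≠ j) {A B : Set M}
    (hA : MeasurableSet A) (hB : MeasurableSet B) :
    ν {ω | ω i ∈ A ∧ ω j ∈ B} = ρ A * ρ B := by
  have := h {i, j} (fun k ↦ if k = i then A else B) fun k ↦ by split_ifs <;> assumption
  simpa [Finset.prod_pair hij, hij.symm] using this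

end IsIIDLaw

namespace IsIso

variable {M : Type*} [MeasurableSpace M] {μ : Measure M} {T : M → M} {ν : Measure (ℤ → M)}
  {ρ : Measure M} {φ : M → ℤ → M}

theorem measureReal_coord (hφ : IsIso μ ν T (fun ω t ↦ ω (t + 1)) φ)
    (hν : IsIIDLaw ν ρ) {A : Set M} (hA : MeasurableSet A) :
    ρ.real A = μ.real {m | φ m 0 ∈ A} := by
  calc ρ.real A = ν.real {ω | ω 0 ∈ A} := by simp only [measureReal_def, hν.measure_coord 0 hA]
    _ = μ.real {m | φ m 0 ∈ A} := (hφ.measureReal_preimage (measurable_pi_apply 0 hA)).symm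

theorem measureReal_mul_eq (hφ : IsIso μ ν T (fun ω t ↦ ω (t + 1)) φ)
    (hν : IsIIDLaw ν ρ) {A B : Set M} (hA : MeasurableSet A) (hB : MeasurableSet B) :
    ρ.real A * ρ.real B = μ.real {m | φ m 0 ∈ A ∧ φ (T m) 0 ∈ B} := by
  have hW : MeasurableSet {ω : ℤ → M | ω 0 ∈ A ∧ ω 1 ∈ B} :=
    (measurable_pi_apply 0 hA).inter (measurable_pi_apply 1 hB)
  calc ρ.real A * ρ.real B = ν.real {ω | ω 0 ∈ A ∧ ω 1 ∈ B} := by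
        simp only [measureReal_def, hν.measure_coord_pair zero_ne_one hA hB, ENNReal.toReal_mul]
    _ = μ.real (φ ⁻¹' {ω | ω 0 ∈ A ∧ ω 1 ∈ B}) := (hφ.measureReal_preimage hW).symm
    _ = μ.real {m | φ m 0 ∈ A ∧ φ (T m) 0 ∈ B} := by
        refine measureReal_congr ?_
        filter_upwards [hφ.ae_comp_eq] with m hm
        change (_ ∧ _) = (_ ∧ _)
        simp only [hm, zero_add]

theorem measureReal_mul_le_two_mul [PseudoMetricSpace M] [IsFiniteMeasure μ]
    (hφ : IsIso μ ν T (fun ω t ↦ ω (t + 1)) φ) (hν : IsIIDLaw ν ρ) (hT : Measurable T)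
    (hTpres : ∀ A : Set M, MeasurableSet A → μ (T '' A) = μ A) {A B : Set M}
    (hA : MeasurableSet A) (hB : MeasurableSet B) {ε : ℝ}
    (hAB : ∀ m, dist m (φ m 0) < ε → dist (T m) (φ (T m) 0) < ε → φ m 0 ∈ A → φ (T m) 0 ∉ B) :
    ρ.real A * ρ.real B ≤ 2 * μ.real {m | ε ≤ dist m (φ m 0)} := by
  set E := {m | ε ≤ dist m (φ m 0)}
  have hsub : {m | φ m 0 ∈ A ∧ φ (T m) 0 ∈ B} ⊆ E ∪ T ⁻¹' E := by
    rintro m ⟨hmA, hmB⟩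
    by_contra! hm
    simp only [mem_union, mem_preimage, not_or, E, mem_ofPred_eq, not_le] at hm
    exact hAB m hm.1 hm.2 hmA hmB
  have hTE : μ.real (T ⁻¹' E) ≤ μ.real E :=
    ENNReal.toReal_mono (measure_ne_top _ _) (measure_preimage_le_of_measure_image hT hTpres E)
  calc ρ.real A * ρ.real B = μ.real {m | φ m 0 ∈ A ∧ φ (T m) 0 ∈ B} :=
        hφ.measureReal_mul_eq hν hA hB
    _ ≤ μ.real (E ∪ T ⁻¹' E) := measureReal_mono hsub
    _ ≤ μ.real E + μ.real (T ⁻¹' E) := measureReal_union_le _ _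
    _ ≤ 2 * μ.real E := by linarith

end IsIso

theorem stmt12_general {M : Type*} [MetricSpace M] [MeasurableSpace M]
    (μ : Measure M) [IsProbabilityMeasure μ]
    (hballs : ∀ (x : M) (r : ℝ), MeasurableSet (Metric.ball x r))
    (T : M → M) (hTmeas : Measurable T)
    (hTpres : ∀ A : Set M, MeasurableSet A → μ (T '' A) = μ A)
    (x : M) (hcont : ContinuousAt T x)
    (hx : ∀ r : ℝ, 0 < r → 0 < μ (Metric.ball x r))
    (D : Set M) (hDpos : 0 < μ D)
    (hDdist : 0 < Metric.infDist (T x) D) :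
    ∃ ε : ℝ, 0 < ε ∧
      ¬ ∃ (ρ : Measure M) (_ : IsProbabilityMeasure ρ) (ν : Measure (ℤ → M))
          (_ : IsProbabilityMeasure ν) (φ : M → (ℤ → M)),
        (∀ (F : Finset ℤ) (A : ℤ → Set M), (∀ i, MeasurableSet (A i)) →
          ν {ω | ∀ i ∈ F, ω i ∈ A i} = ∏ i ∈ F, ρ (A i)) ∧
        IsIso μ ν T (fun ω t => ω (t + 1)) φ ∧
        μ {m : M | ε ≤ dist m (φ m 0)} < ENNReal.ofReal ε := by
  set δ := infDist (T x) D
  obtain ⟨r, hr, hTr⟩ := Metric.continuousAt_iff.mp hcont (δ / 3) (by positivity)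
  set a := μ.real (ball x (r / 3))
  set b := μ.real D
  have ha : 0 < a := ENNReal.toReal_pos (hx _ (by positivity)).ne' (measure_ne_top _ _)
  have hb : 0 < b := ENNReal.toReal_pos hDpos.ne' (measure_ne_top _ _)
  set ε := min (min (δ / 3) (r / 3)) (a * b / 8)
  have hεδ : ε ≤ δ / 3 := (min_le_left _ _).trans (min_le_left _ _)
  have hεr : ε ≤ r / 3 := (min_le_left _ _).trans (min_le_right _ _)
  refine ⟨ε, by positivity, ?_⟩
  rintro ⟨ρ, -, ν, -, φ, hν, hφ, hclose⟩
  set E := {m | ε ≤ dist m (φ m 0)}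
  have h₀ : a ≤ ρ.real (ball x (r - ε)) + μ.real E := by
    rw [hφ.measureReal_coord hν (hballs _ _)]
    exact measureReal_le_preimage_add μ (φ · 0)
      ((Metric.thickening_ball x ε _).trans (ball_subset_ball (by linarith)))
  have h₁ : b ≤ ρ.real (ball (T x) (δ - ε))ᶜ + μ.real E := by
    rw [hφ.measureReal_coord hν (hballs _ _).compl]
    exact measureReal_le_preimage_add μ (φ · 0) (thickening_compl_ball_infDist_subset _ _ _)
  have h₀₁ : ρ.real (ball x (r - ε)) * ρ.real (ball (T x) (δ - ε))ᶜ ≤ 2 * μ.real E :=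
    hφ.measureReal_mul_le_two_mul hν hTmeas hTpres (hballs _ _) (hballs _ _).compl
    fun m hm hTm h0 h1 ↦ h1 <| ball_subset_ball (by linarith) <|
      mem_ball_of_mapsTo_ball (fun y hy ↦ hTr hy) h0 hm hTm
  exact h₀₁.not_gt <| two_mul_lt_mul_of_le_add ha hb measureReal_le_one measureReal_le_one h₀ h₁
    ((ENNReal.toReal_lt_of_lt_ofReal hclose).trans_le (min_le_right _ _))

theorem stmt12 {M : Type*} [MetricSpace M] [MeasurableSpace M]
    (μ : Measure M) [IsProbabilityMeasure μ]
    (hballs : ∀ (x : M) (r : ℝ), MeasurableSet (Metric.ball x r))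
    (T : M → M) (hTbij : Function.Bijective T) (hTmeas : Measurable T)
    (hTpres : ∀ A : Set M, MeasurableSet A → μ (T '' A) = μ A)
    (x : M) (hcont : ContinuousAt T x)
    (hx : ∀ r : ℝ, 0 < r → 0 < μ (Metric.ball x r))
    (D : Set M) (hD : MeasurableSet D) (hDpos : 0 < μ D)
    (hDdist : 0 < Metric.infDist (T x) D) :
    ∃ ε : ℝ, 0 < ε ∧
      ¬ ∃ (ρ : Measure M) (_ : IsProbabilityMeasure ρ) (ν : Measure (ℤ → M))
          (_ : IsProbabilityMeasure ν) (φ : M → (ℤ → M)),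
        (∀ (F : Finset ℤ) (A : ℤ → Set M), (∀ i, MeasurableSet (A i)) →
          ν {ω | ∀ i ∈ F, ω i ∈ A i} = ∏ i ∈ F, ρ (A i)) ∧
        IsIso μ ν T (fun ω t => ω (t + 1)) φ ∧
        μ {m : M | ε ≤ dist m (φ m 0)} < ENNReal.ofReal ε :=
  stmt12_general μ hballs T hTmeas hTpres x hcont hx D hDpos hDdist
end

section
/- Let (M, Σ, μ, T) be a Bernoulli system (a measure-preserving system isomorphic to a Bernoulli shift with finitely many outcomes) whose underlying metric space (M, d) is separable and whose σ-algebra contains all open balls. Then for every ε > 0 there exists an irreducible and aperiodic finite-state Markov process with outcomes in M such that (M, Σ, μ, T) is ε-congruent to (the deterministic representation of) this Markov process. -/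
/-!
Symbols of probability zero almost surely never occur, so we may assume every symbol has positive
probability. Coding a Bernoulli sequence by its sliding `(2n+1)`-blocks then gives a stationary
Markov chain on words: `u` can be followed by `v` exactly when `v` is `u` shifted by one letter,
with probability the weight of the new letter. Any word leads to any other in exactly `k` steps
for every `k ≥ 2n + 1`, so the chain is irreducible and aperiodic, and the block code is an
isomorphism since the central letter of each block recovers the sequence. For `ε`-congruence,
cover `M` up to measure `ε/2` by finitely many `ε`-balls around a dense sequence, approximate
each ball by the pull-back of a cylinder on the coordinates `[-n, n]`, with total error `< ε/2`,
and decode a block as the centre of a ball whose cylinder contains it.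
-/

open MeasureTheory Set
open scoped ENNReal

open Filter
open scoped symmDiff

section IsIso

variable {M Ω Λ : Type*} [MeasurableSpace M] [MeasurableSpace Ω] [MeasurableSpace Λ]
  {μ : Measure M} {ν : Measure Ω} {κ : Measure Λ} {T : M → M} {S : Ω → Ω} {R : Λ → Λ}
  {φ : M → Ω} {ψ : Ω → Λ}

theorem IsIso.measure_preimage_le (h : IsIso μ ν T S φ) {D : Set Ω} (hD : MeasurableSet D) :
    μ (φ ⁻¹' D) ≤ ν D := by
  obtain ⟨Mh, Ωh, -, hΩh, hMhc, -, -, -, hbij, himg, hpre, -⟩ := h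
  have hsub : Mh ∩ φ ⁻¹' D ⊆ Mh ∩ φ ⁻¹' (Ωh ∩ D) := fun m hm => ⟨hm.1, hbij.mapsTo hm.1, hm.2⟩
  calc μ (φ ⁻¹' D) ≤ μ Mhᶜ + μ (Mh ∩ φ ⁻¹' (Ωh ∩ D)) := by
        refine (measure_mono fun m hm => ?_).trans (measure_union_le _ _)
        by_cases hm' : m ∈ Mh
        exacts [Or.inr (hsub ⟨hm', hm⟩), Or.inl hm']
    _ = ν (φ '' (Mh ∩ φ ⁻¹' (Ωh ∩ D))) := by
        rw [hMhc, zero_add, (himg _ (hpre _ (hΩh.inter hD) inter_subset_left) inter_subset_left).2]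
    _ ≤ ν D := measure_mono <| by rintro _ ⟨m, ⟨-, -, hm⟩, rfl⟩; exact hm

theorem IsIso.exists_measure_symmDiff_preimage_eq_zero (h : IsIso μ ν T S φ) {A : Set M}
    (hA : MeasurableSet A) : ∃ B, MeasurableSet B ∧ μ (A ∆ (φ ⁻¹' B)) = 0 := by
  obtain ⟨Mh, Ωh, hMh, -, hMhc, -, -, -, hbij, himg, -, -⟩ := h
  refine ⟨φ '' (A ∩ Mh), (himg _ (hA.inter hMh) inter_subset_right).1, measure_mono_null ?_ hMhc⟩
  intro m hm hmMh
  refine hm.elim (fun ⟨hmA, hmB⟩ => hmB ⟨m, ⟨hmA, hmMh⟩, rfl⟩) fun ⟨⟨m', hm', hφ⟩, hmA⟩ => ?_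
  exact hmA (hbij.injOn hm'.2 hmMh hφ ▸ hm'.1)

theorem IsIso.comp (h₁ : IsIso μ ν T S φ) (h₂ : IsIso ν κ S R ψ) : IsIso μ κ T R (ψ ∘ φ) := by
  have hle := @h₁.measure_preimage_le
  obtain ⟨Mh, Ωh, -, hΩh, hMhc, hΩhc, hTMh, hSΩh, hφ, himg, hpre, hφT⟩ := h₁
  obtain ⟨Ωh', Λh, hΩh', -, hΩhc', hΛhc, hSΩh', -, hψ, himg', hpre', hψS⟩ := h₂
  set Ω₂ := Ωh ∩ Ωh'
  have hΩ₂ : MeasurableSet Ω₂ := hΩh.inter hΩh'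
  refine ⟨Mh ∩ φ ⁻¹' Ω₂, ψ '' Ω₂, hpre _ hΩ₂ inter_subset_left,
    (himg' _ hΩ₂ inter_subset_right).1, ?_, ?_, ?_, ?_,
    (hψ.subset_left inter_subset_right).comp (hφ.subset_right inter_subset_left), ?_, ?_, ?_⟩
  · rw [compl_inter, ← preimage_compl]
    refine measure_union_null hMhc (le_antisymm ((hle hΩ₂.compl).trans ?_) zero_le)
    rw [compl_inter]
    exact (measure_union_null hΩhc hΩhc').le
  · refine measure_mono_null (t := Λhᶜ ∪ ψ '' (Ωh' ∩ Ωhᶜ)) (fun y hy => ?_)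
      (measure_union_null hΛhc ?_)
    · by_cases hyΛ : y ∈ Λh
      · obtain ⟨ω, hω, rfl⟩ := hψ.surjOn hyΛ
        exact Or.inr ⟨ω, ⟨hω, fun hωΩ => hy ⟨ω, ⟨hωΩ, hω⟩, rfl⟩⟩, rfl⟩
      · exact Or.inl hyΛ
    · rw [(himg' _ (hΩh'.inter hΩh.compl) inter_subset_left).2]
      exact measure_mono_null inter_subset_right hΩhc
  · rintro m ⟨hm, hω, hω'⟩
    exact ⟨hTMh hm, by rw [mem_preimage, hφT m hm]; exact ⟨hSΩh hω, hSΩh' hω'⟩⟩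
  · rintro _ ⟨ω, hω, rfl⟩
    exact ⟨S ω, ⟨hSΩh hω.1, hSΩh' hω.2⟩, hψS ω hω.2⟩
  · intro A hA hAsub
    obtain ⟨hφA, hφAν⟩ := himg A hA (hAsub.trans inter_subset_left)
    obtain ⟨hψφA, hψφAκ⟩ := himg' _ hφA (image_subset_iff.2 fun m hm => (hAsub hm).2.2)
    rw [image_comp]
    exact ⟨hψφA, hψφAκ.trans hφAν⟩
  · intro B hB hBsub
    have hBΛ : B ⊆ Λh := hBsub.trans (image_subset_iff.2 fun ω hω => hψ.mapsTo hω.2)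
    convert (hpre _ hΩ₂ inter_subset_left).inter
      (hpre _ (hΩh.inter (hpre' B hB hBΛ)) inter_subset_left) using 1
    ext m
    simp only [Ω₂, mem_inter_iff, mem_preimage, Function.comp_apply]
    tauto
  · rintro m ⟨hm, -, hω'⟩
    simp only [Function.comp_apply, hφT m hm, hψS _ hω']

theorem isIso_map_of_invOn {ρ : Ω → Λ} {g : Λ → Ω} {G : Set Ω} {H : Set Λ}
    (hρ : Measurable ρ) (hg : Measurable g) (hG : MeasurableSet G) (hH : MeasurableSet H)
    (hGc : ν Gᶜ = 0) (hSG : MapsTo S G G) (hRH : MapsTo R H H) (hρG : MapsTo ρ G H)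
    (hgH : MapsTo g H G) (hinv : InvOn g ρ G H) (hρS : ∀ ω ∈ G, ρ (S ω) = R (ρ ω)) :
    IsIso ν (ν.map ρ) S R ρ := by
  have himage : ∀ A ⊆ G, ρ '' A = H ∩ g ⁻¹' A := fun A hAG => by
    ext y
    refine ⟨?_, fun ⟨hy, hyA⟩ => ⟨g y, hyA, hinv.2 hy⟩⟩
    rintro ⟨ω, hω, rfl⟩
    exact ⟨hρG (hAG hω), by rw [mem_preimage, hinv.1 (hAG hω)]; exact hω⟩
  refine ⟨G, H, hG, hH, hGc, ?_, hSG, hRH, hinv.bijOn hρG hgH, fun A hA hAG => ?_,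
    fun B hB _ => hG.inter (hρ hB), hρS⟩
  · rw [Measure.map_apply hρ hH.compl]
    exact measure_mono_null (fun ω hω hωG => hω (hρG hωG)) hGc
  · rw [himage A hAG, Measure.map_apply hρ (hH.inter (hg hA))]
    refine ⟨hH.inter (hg hA), measure_congr (eventuallyEq_set.2 ?_)⟩
    filter_upwards [mem_ae_iff.2 hGc] with ω hω
    simp only [mem_preimage, mem_inter_iff, hρG hω, hinv.1 hω, true_and]

end IsIso

theorem measurableSet_setOf_forall_apply_eq {ι B : Type*} [Countable ι] [MeasurableSpace B]
    [MeasurableSingletonClass B] (P : ι → Prop) (f : ι → ℤ) (a : ι → B) :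
    MeasurableSet {x : ℤ → B | ∀ i, P i → x (f i) = a i} := by
  simp only [ofPred_forall]
  exact .iInter fun i => .iInter fun _ => measurable_pi_apply _ (measurableSet_singleton _)

def IsBernoulli {A : Type*} [MeasurableSpace A] (ν : Measure (ℤ → A)) (p : A → ℝ≥0∞) : Prop :=
  ∀ (F : Finset ℤ) (a : ℤ → A), ν {ω | ∀ i ∈ F, ω i = a i} = ∏ i ∈ F, p (a i)

namespace IsBernoulli

variable {A : Type*} [MeasurableSpace A] {ν : Measure (ℤ → A)} {p : A → ℝ≥0∞}

theorem isProbabilityMeasure [Nonempty A] (hν : IsBernoulli ν p) : IsProbabilityMeasure ν :=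
  ⟨by simpa using hν ∅ fun _ => Classical.arbitrary _⟩

theorem measure_compl_setOf_forall_ne_zero [Countable A] (hν : IsBernoulli ν p) :
    ν {ω | ∀ t, p (ω t) ≠ 0}ᶜ = 0 := by
  have : {ω | ∀ t, p (ω t) ≠ 0}ᶜ = ⋃ t, ⋃ a ∈ {a | p a = 0}, {ω : ℤ → A | ω t = a} := by
    ext; simp
  rw [this]
  refine measure_iUnion_null fun t => (measure_biUnion_null_iff (to_countable _)).2 fun a ha => ?_
  rw [show {ω : ℤ → A | ω t = a} = {ω | ∀ i ∈ ({t} : Finset ℤ), ω i = a} by simp, hν]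
  simpa using ha

theorem exists_isIso_subtype_ne_zero [Countable A] [MeasurableSingletonClass A]
    (hν : IsBernoulli ν p) {a₀ : A} (ha₀ : p a₀ ≠ 0) :
    ∃ (ν' : Measure (ℤ → {a // p a ≠ 0})) (ρ : (ℤ → A) → ℤ → {a // p a ≠ 0}),
      IsBernoulli ν' (fun a => p a) ∧
        IsIso ν ν' (fun ω t => ω (t + 1)) (fun ω t => ω (t + 1)) ρ := by
  classical
  set proj : A → {a // p a ≠ 0} := fun a => if h : p a ≠ 0 then ⟨a, h⟩ else ⟨a₀, ha₀⟩
  set ρ : (ℤ → A) → ℤ → {a // p a ≠ 0} := fun ω t => proj (ω t)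
  set G := {ω : ℤ → A | ∀ t, p (ω t) ≠ 0}
  have hρ : Measurable ρ :=
    measurable_pi_lambda _ fun t => (measurable_of_countable proj).comp (measurable_pi_apply t)
  have hg : Measurable fun (x : ℤ → {a // p a ≠ 0}) t => (x t : A) :=
    measurable_pi_lambda _ fun t => measurable_subtype_coe.comp (measurable_pi_apply t)
  have hG : MeasurableSet G := by
    simp only [G, ofPred_forall]
    exact .iInter fun t =>
      (MeasurableSet.of_discrete (s := {a : A | p a ≠ 0})).preimage (measurable_pi_apply t)
  have hGc : ν Gᶜ = 0 := hν.measure_compl_setOf_forall_ne_zero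
  have hρG : ∀ ω ∈ G, ∀ t, (ρ ω t : A) = ω t := fun ω hω t => by simp [ρ, proj, hω t]
  refine ⟨ν.map ρ, ρ, fun F a => ?_, isIso_map_of_invOn hρ hg hG .univ hGc
    (fun ω hω t => hω (t + 1)) (mapsTo_univ _ _) (mapsTo_univ _ _) (fun x _ t => (x t).2)
    ⟨fun ω hω => funext (hρG ω hω), fun x _ => funext fun t => by simp [ρ, proj, (x t).2]⟩
    fun _ _ => rfl⟩
  rw [Measure.map_apply hρ (measurableSet_setOf_forall_apply_eq (· ∈ F) (fun i => i) a),
    ← hν F fun i => a i]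
  refine measure_congr (eventuallyEq_set.2 ?_)
  filter_upwards [mem_ae_iff.2 hGc] with ω hω
  simp only [mem_preimage, mem_ofPred_eq, Subtype.ext_iff, hρG ω hω]

end IsBernoulli

section Window

variable {A : Type*}

def window (m : ℕ) (s : ℤ) (ω : ℤ → A) : Fin (m + 1) → A := fun i => ω (s + i)

theorem window_tail_eq_init (m : ℕ) (s : ℤ) (ω : ℤ → A) :
    Fin.tail (window m s ω) = Fin.init (window m (s + 1) ω) := by
  funext i
  simp only [window, Fin.tail, Fin.init, Fin.val_succ, Fin.val_castSucc]
  congr 1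
  push_cast
  ring

theorem window_shift (m : ℕ) (s : ℤ) (ω : ℤ → A) :
    window m s (fun t => ω (t + 1)) = window m (s + 1) ω := by
  funext i
  simp only [window]
  congr 1
  ring

theorem exists_window_eq_of_chain {m r : ℕ} {u : ℕ → Fin (m + 1) → A}
    (hu : ∀ t < r, Fin.tail (u t) = Fin.init (u (t + 1))) (s : ℤ) :
    ∃ β : ℤ → A, ∀ t ≤ r, window m (s + t) β = u t := by
  induction r with
  | zero =>
    refine ⟨fun j => u 0 ⟨min (j - s).toNat m, by omega⟩, fun t ht => ?_⟩
    obtain rfl := Nat.le_zero.1 ht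
    funext i
    simp only [window]
    congr
    simp only [Nat.cast_zero, add_zero, add_sub_cancel_left, Int.toNat_natCast]
    omega
  | succ r ih =>
    obtain ⟨β, hβ⟩ := ih fun t ht => hu t (by omega)
    refine ⟨Function.update β (s + (r + 1 : ℕ) + m) (u (r + 1) (Fin.last m)), fun t ht => ?_⟩
    rcases Nat.lt_or_eq_of_le ht with ht | rfl
    · rw [← hβ t (by omega)]
      funext i
      simp only [window]
      rw [Function.update_of_ne]
      have := i.isLt
      omega
    · funext i
      induction i using Fin.lastCases with
      | last => simp [window]
      | cast j =>
        have hj := congrFun (hu r (by omega)) j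
        simp only [Fin.tail, Fin.init] at hj
        rw [← hj, ← hβ r le_rfl]
        simp only [window]
        rw [Function.update_of_ne (by have := j.isLt; push_cast [Fin.val_castSucc]; omega)]
        congr 1
        push_cast [Fin.val_castSucc, Fin.val_succ]
        ring

theorem setOf_forall_window_eq_eq_setOf_forall_eq {m r : ℕ} {s : ℤ} {u : ℕ → Fin (m + 1) → A}
    {β : ℤ → A} (hβ : ∀ t ≤ r, window m (s + t) β = u t) :
    {ω | ∀ t ≤ r, window m (s + t) ω = u t} =
      {ω | ∀ j ∈ (Finset.range (m + 1 + r)).image fun j : ℕ => s + j, ω j = β j} := by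
  ext ω
  simp only [mem_ofPred_eq, Finset.mem_image, Finset.mem_range, forall_exists_index, and_imp,
    forall_apply_eq_imp_iff₂]
  constructor
  · intro h j hj
    have := congrFun ((h (min j r) (min_le_right _ _)).trans (hβ _ (min_le_right _ _)).symm)
      ⟨j - min j r, by omega⟩
    simp only [window] at this
    convert this using 2 <;> push_cast <;> omega
  · intro h t ht
    rw [← hβ t ht]
    funext i
    have := h (t + i) (by omega)
    simp only [window]
    push_cast at this
    rwa [← add_assoc] at this

theorem apply_zero_eq_of_chain {m : ℕ} {u : ℤ → Fin (m + 1) → A}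
    (hu : ∀ t, Fin.tail (u t) = Fin.init (u (t + 1))) (t : ℤ) (i : Fin (m + 1)) :
    u (t + i) 0 = u t i := by
  induction i using Fin.induction generalizing t with
  | zero => simp
  | succ i ih =>
    have hi := congrFun (hu t) i
    simp only [Fin.tail, Fin.init] at hi
    rw [hi, ← ih]
    congr 1
    push_cast [Fin.val_castSucc, Fin.val_succ]
    ring

theorem measurable_window [MeasurableSpace A] (m : ℕ) (s : ℤ) :
    Measurable (window (A := A) m s) :=
  measurable_pi_lambda _ fun _ => measurable_pi_apply _

end Window

theorem Matrix.pow_apply_ne_zero_of_chain {ι R : Type*} [Fintype ι] [DecidableEq ι] [Semiring R]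
    [PartialOrder R] [CanonicallyOrderedAdd R] [NoZeroDivisors R] [Nontrivial R]
    (P : Matrix ι ι R) {k : ℕ} (c : ℕ → ι) (hc : ∀ t < k, P (c t) (c (t + 1)) ≠ 0) :
    (P ^ k) (c 0) (c k) ≠ 0 := by
  induction k with
  | zero => simp
  | succ k ih =>
    rw [pow_succ, Matrix.mul_apply]
    intro h
    rcases mul_eq_zero.1 ((Finset.sum_eq_zero_iff.1 h) (c k) (Finset.mem_univ _)) with h | h
    exacts [ih (fun t ht => hc t (by omega)) h, hc k (by omega) h]

theorem Matrix.reindex_pow {ι κ R : Type*} [Fintype ι] [DecidableEq ι] [Fintype κ]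
    [DecidableEq κ] [Semiring R] (e : ι ≃ κ) (P : Matrix ι ι R) (k : ℕ) :
    Matrix.reindex e e P ^ k = Matrix.reindex e e (P ^ k) := by
  rw [← Matrix.coe_reindexAlgEquiv ℕ R, map_pow]

section BlockChain

variable {A : Type*} (p : A → ℝ≥0∞) (m : ℕ)

open Classical in
noncomputable def blockTransition : Matrix (Fin (m + 1) → A) (Fin (m + 1) → A) ℝ≥0∞ :=
  Matrix.of fun u v => if Fin.tail u = Fin.init v then p (v (Fin.last m)) else 0

noncomputable def blockStationary (u : Fin (m + 1) → A) : ℝ≥0∞ := ∏ i, p (u i)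

variable {p m}

theorem blockTransition_of_tail_eq_init {u v : Fin (m + 1) → A} (h : Fin.tail u = Fin.init v) :
    blockTransition p m u v = p (v (Fin.last m)) := by
  simp [blockTransition, h]

variable [Fintype A]

theorem sum_blockTransition (hp : ∑ a, p a = 1) (u : Fin (m + 1) → A) :
    ∑ v, blockTransition p m u v = 1 := by
  classical
  rw [← (Fin.snocEquiv fun _ => A).sum_comp, Fintype.sum_prod_type]
  simp [blockTransition, Fin.snocEquiv, hp]

theorem sum_blockStationary (hp : ∑ a, p a = 1) : ∑ u, blockStationary p m u = 1 := by
  classical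
  simp [blockStationary, ← Fintype.prod_sum (fun _ : Fin (m + 1) => p), hp]

theorem sum_blockStationary_mul_blockTransition (hp : ∑ a, p a = 1) (v : Fin (m + 1) → A) :
    ∑ u, blockStationary p m u * blockTransition p m u v = blockStationary p m v := by
  classical
  rw [← (Fin.consEquiv fun _ => A).sum_comp, Fintype.sum_prod_type]
  conv_rhs => rw [blockStationary, Fin.prod_univ_castSucc]
  simp [blockStationary, blockTransition, Fin.consEquiv, Fin.prod_univ_succ, ← Finset.sum_mul, hp,
    Fin.init]

theorem blockTransition_pow_ne_zero [DecidableEq A] (hp : ∀ a, p a ≠ 0) {k : ℕ} (hk : m + 1 ≤ k)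
    (u v : Fin (m + 1) → A) : (blockTransition p m ^ k) u v ≠ 0 := by
  classical
  set β : ℤ → A := fun j =>
    if j < k then u ⟨min j.toNat m, by omega⟩ else v ⟨min (j - k).toNat m, by omega⟩
  have hu : window m 0 β = u := by
    funext i
    simp only [window, β, zero_add]
    rw [if_pos (by omega)]
    congr
    simp only [Int.toNat_natCast]
    omega
  have hv : window m k β = v := by
    funext i
    simp only [window, β]
    rw [if_neg (by omega)]
    congr
    simp only [add_sub_cancel_left, Int.toNat_natCast]
    omega
  have := Matrix.pow_apply_ne_zero_of_chain (blockTransition p m) (k := k)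
    (fun t => window m t β) fun t _ => by
      rw [blockTransition_of_tail_eq_init (by rw [Nat.cast_succ]; exact window_tail_eq_init m t β)]
      exact hp _
  simpa [hu, hv] using this

end BlockChain

section BlockCode

variable {A B : Type*} [MeasurableSpace A] {m : ℕ}

theorem IsBernoulli.measure_setOf_window_eq [Fintype A] {ν : Measure (ℤ → A)} {p : A → ℝ≥0∞}
    (hν : IsBernoulli ν p) (s : ℤ) (r : ℕ) (u : ℕ → Fin (m + 1) → A) :
    ν {ω | ∀ t ≤ r, window m (s + t) ω = u t} =
      blockStationary p m (u 0) * ∏ t ∈ Finset.range r, blockTransition p m (u t) (u (t + 1)) := by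
  by_cases hu : ∀ t < r, Fin.tail (u t) = Fin.init (u (t + 1))
  · obtain ⟨β, hβ⟩ := exists_window_eq_of_chain hu s
    rw [setOf_forall_window_eq_eq_setOf_forall_eq hβ, hν,
      Finset.prod_image fun i _ j _ h => by simpa using h, Finset.prod_range_add]
    congr 1
    · rw [← hβ 0 (Nat.zero_le _)]
      simp [blockStationary, window, Fin.prod_univ_eq_prod_range fun j => p (β (s + j))]
    · refine Finset.prod_congr rfl fun t ht => ?_
      have ht := Finset.mem_range.1 ht
      rw [← hβ t ht.le, ← hβ (t + 1) ht, blockTransition_of_tail_eq_init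
        (by rw [Nat.cast_succ, ← add_assoc]; exact window_tail_eq_init m _ β)]
      simp only [window, Fin.val_last]
      congr 2
      push_cast
      ring
  · push Not at hu
    obtain ⟨t, ht, hne⟩ := hu
    have hempty : {ω | ∀ t ≤ r, window m (s + t) ω = u t} = ∅ :=
      eq_empty_of_forall_notMem fun ω hω => hne <| by
        rw [← hω t ht.le, ← hω (t + 1) ht, Nat.cast_succ, ← add_assoc]
        exact window_tail_eq_init m _ ω
    rw [hempty, measure_empty, Finset.prod_eq_zero (Finset.mem_range.2 ht)
      (by simp [blockTransition, hne]), mul_zero]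

def blockCode (e : (Fin (m + 1) → A) ≃ B) (c : ℤ) (ω : ℤ → A) : ℤ → B :=
  fun t => e (window m (t + c) ω)

variable [MeasurableSingletonClass A] [Countable A] [MeasurableSpace B]

theorem measurable_blockCode (e : (Fin (m + 1) → A) ≃ B) (c : ℤ) : Measurable (blockCode e c) :=
  measurable_pi_lambda _ fun t => (measurable_of_countable e).comp (measurable_window m (t + c))

theorem isIso_blockCode [MeasurableSingletonClass B] [Countable B] (ν : Measure (ℤ → A))
    (e : (Fin (m + 1) → A) ≃ B) (c : ℤ) :
    IsIso ν (ν.map (blockCode e c)) (fun ω t => ω (t + 1)) (fun ω t => ω (t + 1))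
      (blockCode e c) := by
  set H := {x : ℤ → B | ∀ t, Fin.tail (e.symm (x t)) = Fin.init (e.symm (x (t + 1)))}
  have hH : MeasurableSet H := by
    have hq : MeasurableSet {q : B × B | Fin.tail (e.symm q.1) = Fin.init (e.symm q.2)} :=
      .of_discrete
    simp only [H, ofPred_forall]
    exact .iInter fun t => hq.preimage ((measurable_pi_apply t).prodMk (measurable_pi_apply _) :
      Measurable fun x : ℤ → B => (x t, x (t + 1)))
  refine isIso_map_of_invOn (g := fun x s => e.symm (x (s - c)) 0) (measurable_blockCode e c)
    (measurable_pi_lambda _ fun s => (measurable_of_countable fun b => e.symm b 0).comp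
      (measurable_pi_apply _)) .univ hH (by simp) (mapsTo_univ _ _) (fun x hx t => hx (t + 1))
    (fun ω _ t => ?_) (mapsTo_univ _ _) ⟨fun ω _ => ?_, fun x hx => ?_⟩ fun ω _ => ?_
  · simp only [blockCode, Equiv.symm_apply_apply, add_right_comm t 1 c]
    exact window_tail_eq_init m _ ω
  · funext s
    simp [blockCode, window]
  · funext t
    simp only [blockCode]
    rw [← e.eq_symm_apply]
    funext i
    rw [← apply_zero_eq_of_chain (u := fun t => e.symm (x t)) hx]
    simp [window, add_right_comm t c]
  · funext t
    simp only [blockCode, window_shift, add_right_comm t 1 c]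

theorem IsBernoulli.map_blockCode_apply [Fintype A] {ν : Measure (ℤ → A)} {p : A → ℝ≥0∞}
    (hν : IsBernoulli ν p) [MeasurableSingletonClass B] (e : (Fin (m + 1) → A) ≃ B) (c k : ℤ)
    (r : ℕ) (a : ℕ → B) :
    ν.map (blockCode e c) {x | ∀ t : ℕ, t ≤ r → x (k + t) = a t} =
      blockStationary p m (e.symm (a 0)) *
        ∏ t ∈ Finset.range r, blockTransition p m (e.symm (a t)) (e.symm (a (t + 1))) := by
  rw [Measure.map_apply (measurable_blockCode e c)
    (measurableSet_setOf_forall_apply_eq (· ≤ r) (fun t : ℕ => k + t) a)]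
  convert hν.measure_setOf_window_eq (k + c) r fun t => e.symm (a t) using 2
  ext ω
  simp only [mem_preimage, mem_ofPred_eq, blockCode, ← e.eq_symm_apply,
    add_right_comm k _ c]

end BlockCode

section Approximation

variable {A : Type*}

theorem exists_cylinder_eq_window_preimage {s : Finset ℤ} (S : Set ((i : s) → A)) {n : ℕ}
    (hn : ∀ i ∈ s, i.natAbs ≤ n) :
    ∃ S' : Set (Fin (2 * n + 1) → A), cylinder s S = window (2 * n) (-n) ⁻¹' S' := by
  refine ⟨{w | (fun i : s => w ⟨((i : ℤ) + n).toNat, by have := hn i i.2; omega⟩) ∈ S}, ?_⟩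
  ext ω
  simp only [mem_cylinder, mem_preimage, mem_ofPred_eq, window]
  convert Iff.rfl using 3 with i
  congr 1
  have := hn i i.2
  omega

variable [MeasurableSpace A]

theorem eventually_exists_measure_symmDiff_window_preimage_lt (ν : Measure (ℤ → A))
    [IsFiniteMeasure ν] {B : Set (ℤ → A)} (hB : MeasurableSet B) {δ : ℝ≥0∞} (hδ : 0 < δ) :
    ∀ᶠ n in atTop, ∃ S : Set (Fin (2 * n + 1) → A), ν (B ∆ (window (2 * n) (-n) ⁻¹' S)) < δ := by
  obtain ⟨t, ht, htB⟩ := exists_measure_symmDiff_lt_of_generateFrom_isSetRing (μ := ν)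
    isSetRing_measurableCylinders ⟨{univ}, countable_singleton _,
      singleton_subset_iff.2 (univ_mem_measurableCylinders _), by simp⟩
    generateFrom_measurableCylinders.symm hB hδ
  obtain ⟨s, S, -, rfl⟩ := (mem_measurableCylinders t).1 ht
  filter_upwards [(eventually_all_finset s).2 fun i _ => eventually_ge_atTop i.natAbs] with n hn
  obtain ⟨S', hS'⟩ := exists_cylinder_eq_window_preimage S hn
  exact ⟨S', by rwa [symmDiff_comm, ← hS']⟩

theorem IsIso.eventually_exists_measure_symmDiff_window_preimage_lt [MeasurableSingletonClass A]
    [Countable A] {M : Type*} [MeasurableSpace M] {μ : Measure M} {ν : Measure (ℤ → A)}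
    [IsFiniteMeasure ν] {T : M → M} {T' : (ℤ → A) → ℤ → A} {φ : M → ℤ → A}
    (h : IsIso μ ν T T' φ) {E : Set M} (hE : MeasurableSet E) {δ : ℝ≥0∞} (hδ : 0 < δ) :
    ∀ᶠ n in atTop, ∃ S : Set (Fin (2 * n + 1) → A),
      μ (E ∆ (φ ⁻¹' (window (2 * n) (-n) ⁻¹' S))) < δ := by
  obtain ⟨B, hB, hEB⟩ := h.exists_measure_symmDiff_preimage_eq_zero hE
  filter_upwards [_root_.eventually_exists_measure_symmDiff_window_preimage_lt ν hB hδ]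
    with n ⟨S, hS⟩
  refine ⟨S, lt_of_le_of_lt ?_ hS⟩
  calc μ (E ∆ (φ ⁻¹' (window (2 * n) (-n) ⁻¹' S)))
      ≤ μ (E ∆ (φ ⁻¹' B)) + μ ((φ ⁻¹' B) ∆ (φ ⁻¹' (window (2 * n) (-n) ⁻¹' S))) :=
        measure_symmDiff_le _ _ _
    _ ≤ ν (B ∆ (window (2 * n) (-n) ⁻¹' S)) := by
        rw [hEB, zero_add, ← preimage_symmDiff]
        exact h.measure_preimage_le (hB.symmDiff (measurable_window _ _ .of_discrete))

end Approximation

section Decoder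

variable {M : Type*} [PseudoMetricSpace M]

theorem exists_decoder_setOf_le_dist_subset {W : Type*} (f : M → W) (x : ℕ → M) (ε : ℝ)
    (K : ℕ) (S : ℕ → Set W) :
    ∃ dec : W → M, {m | ε ≤ dist m (dec (f m))} ⊆
      (⋃ k ∈ Finset.range K, Metric.ball (x k) ε)ᶜ ∪
        ⋃ k ∈ Finset.range K, Metric.ball (x k) ε ∆ (f ⁻¹' S k) := by
  classical
  refine ⟨fun w => if h : ∃ k ∈ Finset.range K, w ∈ S k then x h.choose else x 0,
    fun m hm => ?_⟩
  refine or_iff_not_imp_left.2 fun hcov => by_contra fun hsd => ?_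
  rw [notMem_compl_iff, mem_iUnion₂] at hcov
  obtain ⟨k, hk, hmk⟩ := hcov
  simp only [mem_iUnion₂, not_exists] at hsd
  have hiff : ∀ k ∈ Finset.range K, m ∈ Metric.ball (x k) ε ↔ f m ∈ S k := fun k hk => by
    have := hsd k hk
    rw [mem_symmDiff, mem_preimage] at this
    tauto
  have h : ∃ k ∈ Finset.range K, f m ∈ S k := ⟨k, hk, (hiff k hk).1 hmk⟩
  simp only [mem_ofPred_eq, dif_pos h] at hm
  exact not_le.2 ((hiff _ h.choose_spec.1).2 h.choose_spec.2) hm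

variable [MeasurableSpace M] {μ : Measure M} [IsFiniteMeasure μ]

theorem exists_measure_compl_biUnion_ball_lt
    (hballs : ∀ (x : M) (r : ℝ), MeasurableSet (Metric.ball x r)) {x : ℕ → M}
    (hx : DenseRange x) {ε : ℝ} (hε : 0 < ε) {δ : ℝ≥0∞} (hδ : 0 < δ) :
    ∃ K, μ (⋃ k ∈ Finset.range K, Metric.ball (x k) ε)ᶜ < δ := by
  have hlim := tendsto_measure_iInter_atTop (μ := μ)
    (s := fun K => (⋃ k ∈ Finset.range K, Metric.ball (x k) ε)ᶜ)
    (fun K => (Finset.measurableSet_biUnion _ fun k _ => hballs _ _).compl.nullMeasurableSet)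
    (fun a b hab => compl_subset_compl.2 <| biUnion_subset_biUnion_left <| by simpa using hab)
    ⟨0, measure_ne_top _ _⟩
  have hempty : ⋂ K, (⋃ k ∈ Finset.range K, Metric.ball (x k) ε)ᶜ = ∅ := by
    refine eq_empty_of_forall_notMem fun m hm => ?_
    obtain ⟨k, hk⟩ := Metric.denseRange_iff.1 hx m ε hε
    exact mem_iInter.1 hm (k + 1) (mem_biUnion (Finset.self_mem_range_succ k) hk)
  rw [hempty, measure_empty] at hlim
  exact (hlim.eventually (gt_mem_nhds hδ)).exists

theorem IsIso.exists_window_decoder [TopologicalSpace.SeparableSpace M] [Nonempty M]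
    (hballs : ∀ (x : M) (r : ℝ), MeasurableSet (Metric.ball x r)) {A : Type*}
    [MeasurableSpace A] [MeasurableSingletonClass A] [Countable A] {ν : Measure (ℤ → A)}
    [IsFiniteMeasure ν] {T : M → M} {T' : (ℤ → A) → ℤ → A} {φ : M → ℤ → A}
    (h : IsIso μ ν T T' φ) {ε : ℝ} (hε : 0 < ε) :
    ∃ (n : ℕ) (dec : (Fin (2 * n + 1) → A) → M),
      μ {m | ε ≤ dist m (dec (window (2 * n) (-n) (φ m)))} < ENNReal.ofReal ε := by
  obtain ⟨x, hx⟩ := TopologicalSpace.exists_dense_seq M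
  have hη : 0 < ENNReal.ofReal ε / 2 := ENNReal.half_pos (ENNReal.ofReal_pos.2 hε).ne'
  obtain ⟨δ, hδ, hδsum⟩ := ENNReal.exists_pos_sum_of_countable' hη.ne' ℕ
  obtain ⟨K, hK⟩ := exists_measure_compl_biUnion_ball_lt (μ := μ) hballs hx hε hη
  obtain ⟨n, hn⟩ := ((eventually_all_finset (Finset.range K)).2 fun k _ =>
    h.eventually_exists_measure_symmDiff_window_preimage_lt (hballs (x k) ε) (hδ k)).exists
  choose! S hS using hn
  obtain ⟨dec, hdec⟩ :=
    exists_decoder_setOf_le_dist_subset (fun m => window (2 * n) (-n) (φ m)) x ε K S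
  refine ⟨n, dec, (measure_mono hdec).trans_lt ?_⟩
  calc _ ≤ μ (⋃ k ∈ Finset.range K, Metric.ball (x k) ε)ᶜ +
        ∑ k ∈ Finset.range K, μ (Metric.ball (x k) ε ∆ (φ ⁻¹' (window (2 * n) (-n) ⁻¹' S k))) :=
        (measure_union_le _ _).trans (add_le_add le_rfl (measure_biUnion_finset_le _ _))
    _ < ENNReal.ofReal ε / 2 + ENNReal.ofReal ε / 2 := ENNReal.add_lt_add hK <|
        (Finset.sum_le_sum fun k hk => (hS k hk).le).trans_lt
          ((ENNReal.sum_le_tsum _).trans_lt hδsum)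
    _ = ENNReal.ofReal ε := ENNReal.add_halves _

end Decoder

theorem stmt13_general {M : Type*} [MetricSpace M] [TopologicalSpace.SeparableSpace M]
    [MeasurableSpace M]
    (μ : Measure M) [IsProbabilityMeasure μ]
    (hballs : ∀ (x : M) (r : ℝ), MeasurableSet (Metric.ball x r))
    (T : M → M)
    -- (M, Σ, μ, T) is a Bernoulli system: isomorphic to a Bernoulli shift
    (hBern : ∃ (N : ℕ) (p : Fin N → ℝ≥0∞) (ν : Measure (ℤ → Fin N))
        (_ : IsProbabilityMeasure ν) (φ : M → (ℤ → Fin N)),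
      0 < N ∧ (∑ k, p k = 1) ∧
      (∀ (F : Finset ℤ) (a : ℤ → Fin N),
        ν {ω | ∀ i ∈ F, ω i = a i} = ∏ i ∈ F, p (a i)) ∧
      IsIso μ ν T (fun ω t => ω (t + 1)) φ) :
    ∀ ε : ℝ, 0 < ε →
      ∃ (l : ℕ) (o : Fin l → M) (P : Matrix (Fin l) (Fin l) ℝ≥0∞)
        (π : Fin l → ℝ≥0∞) (ν : Measure (ℤ → Fin l))
        (_ : IsProbabilityMeasure ν) (φ : M → (ℤ → Fin l)),
      0 < l ∧
      -- P is a stochastic matrix with stationary distribution π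
      (∀ i, ∑ j, P i j = 1) ∧ (∑ i, π i = 1) ∧ (∀ j, ∑ i, π i * P i j = π j) ∧
      -- ν is the law of the corresponding stationary Markov process
      (∀ (k : ℤ) (r : ℕ) (a : ℕ → Fin l),
        ν {ω | ∀ t : ℕ, t ≤ r → ω (k + t) = a t}
          = π (a 0) * ∏ t ∈ Finset.range r, P (a t) (a (t + 1))) ∧
      -- irreducibility
      (∀ i j, ∃ k : ℕ, 1 ≤ k ∧ 0 < (P ^ k) i j) ∧
      -- aperiodicity: gcd of return times is 1
      (∀ i, ∀ d : ℕ, (∀ n : ℕ, 1 ≤ n → 0 < (P ^ n) i i → d ∣ n) → d = 1) ∧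
      -- ε-congruence
      IsIso μ ν T (fun ω t => ω (t + 1)) φ ∧
      μ {m : M | ε ≤ dist m (o (φ m 0))} < ENNReal.ofReal ε := by
  intro ε hε
  classical
  obtain ⟨N, p, ν₀, -, φ₀, -, hp, hν₀, hiso₀⟩ := hBern
  obtain ⟨a₀, ha₀⟩ : ∃ a, p a ≠ 0 := by
    by_contra! h
    simp [h] at hp
  set q : {a // p a ≠ 0} → ℝ≥0∞ := fun a => p a
  have hq : ∑ a, q a = 1 := by
    rw [← hp, ← Finset.sum_filter_ne_zero (f := p)]
    exact (Finset.sum_subtype _ (by simp) p).symm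
  obtain ⟨ν₁, ρ₁, hν₁, hiso₁⟩ := IsBernoulli.exists_isIso_subtype_ne_zero hν₀ ha₀
  have : Nonempty {a // p a ≠ 0} := ⟨⟨a₀, ha₀⟩⟩
  have := hν₁.isProbabilityMeasure
  have := nonempty_of_isProbabilityMeasure μ
  have hiso := hiso₀.comp hiso₁
  obtain ⟨n, dec, hdec⟩ := hiso.exists_window_decoder hballs hε
  set e := Fintype.equivFin (Fin (2 * n + 1) → {a // p a ≠ 0})
  set P := Matrix.reindex e e (blockTransition q (2 * n))
  have hP : ∀ k i j, 2 * n + 1 ≤ k → 0 < (P ^ k) i j := fun k i j hk => by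
    rw [Matrix.reindex_pow]
    exact pos_iff_ne_zero.2 (blockTransition_pow_ne_zero (fun a => a.2) hk _ _)
  refine ⟨_, dec ∘ e.symm, P, blockStationary q (2 * n) ∘ e.symm,
    ν₁.map (blockCode e (-n)),
    Measure.isProbabilityMeasure_map (measurable_blockCode e _).aemeasurable,
    _, Fintype.card_pos, fun i => ?_, ?_, fun j => ?_, hν₁.map_blockCode_apply e (-n),
    fun i j => ⟨2 * n + 1, by omega, hP _ i j le_rfl⟩, fun i d hd => ?_,
    hiso.comp (isIso_blockCode ν₁ e (-n)), by simpa [blockCode] using hdec⟩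
  · exact (e.symm.sum_comp _).trans (sum_blockTransition hq _)
  · exact (e.symm.sum_comp _).trans (sum_blockStationary hq)
  · exact (e.symm.sum_comp fun u => blockStationary _ _ u * blockTransition _ _ u _).trans
      (sum_blockStationary_mul_blockTransition hq _)
  · have h₁ := hd _ (by omega) (hP (2 * n + 1) i i le_rfl)
    have h₂ := hd _ (by omega) (hP (2 * n + 1 + 1) i i (by omega))
    exact Nat.dvd_one.1 ((Nat.dvd_add_right h₁).1 h₂)

theorem stmt13 {M : Type*} [MetricSpace M] [TopologicalSpace.SeparableSpace M]
    [MeasurableSpace M]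
    (μ : Measure M) [IsProbabilityMeasure μ]
    (hballs : ∀ (x : M) (r : ℝ), MeasurableSet (Metric.ball x r))
    (T : M → M) (hTbij : Function.Bijective T) (hTmeas : Measurable T)
    (hTpres : ∀ A : Set M, MeasurableSet A → μ (T '' A) = μ A)
    -- (M, Σ, μ, T) is a Bernoulli system: isomorphic to a Bernoulli shift
    (hBern : ∃ (N : ℕ) (p : Fin N → ℝ≥0∞) (ν : Measure (ℤ → Fin N))
        (_ : IsProbabilityMeasure ν) (φ : M → (ℤ → Fin N)),
      0 < N ∧ (∑ k, p k = 1) ∧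
      (∀ (F : Finset ℤ) (a : ℤ → Fin N),
        ν {ω | ∀ i ∈ F, ω i = a i} = ∏ i ∈ F, p (a i)) ∧
      IsIso μ ν T (fun ω t => ω (t + 1)) φ) :
    ∀ ε : ℝ, 0 < ε →
      ∃ (l : ℕ) (o : Fin l → M) (P : Matrix (Fin l) (Fin l) ℝ≥0∞)
        (π : Fin l → ℝ≥0∞) (ν : Measure (ℤ → Fin l))
        (_ : IsProbabilityMeasure ν) (φ : M → (ℤ → Fin l)),
      0 < l ∧
      -- P is a stochastic matrix with stationary distribution π
      (∀ i, ∑ j, P i j = 1) ∧ (∑ i, π i = 1) ∧ (∀ j, ∑ i, π i * P i j = π j) ∧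
      -- ν is the law of the corresponding stationary Markov process
      (∀ (k : ℤ) (r : ℕ) (a : ℕ → Fin l),
        ν {ω | ∀ t : ℕ, t ≤ r → ω (k + t) = a t}
          = π (a 0) * ∏ t ∈ Finset.range r, P (a t) (a (t + 1))) ∧
      -- irreducibility
      (∀ i j, ∃ k : ℕ, 1 ≤ k ∧ 0 < (P ^ k) i j) ∧
      -- aperiodicity: gcd of return times is 1
      (∀ i, ∀ d : ℕ, (∀ n : ℕ, 1 ≤ n → 0 < (P ^ n) i i → d ∣ n) → d = 1) ∧
      -- ε-congruence
      IsIso μ ν T (fun ω t => ω (t + 1)) φ ∧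
      μ {m : M | ε ≤ dist m (o (φ m 0))} < ENNReal.ofReal ε :=
  stmt13_general μ hballs T hBern
end

section
/- Let (M, Σ, μ, T) be a measure-preserving system and suppose A ∈ Σ with μ(A) > 0 is such that the restricted system (A, Σ∩A, μ_A, T_A) is ergodic with no set C, 0 < μ_A(C) < 1, satisfying T_Aⁿ(C) = C up to measure zero for some n. Then for every finite-valued observation function Φ = Σᵢ oᵢχ_{αᵢ} on M whose partition has at least two cells of positive measure intersected with A (i.e. there exist k ≠ l with μ(A ∩ α_k) > 0 and μ(A ∩ α_l) > 0), the process Z_t = Φ(Tᵗ) restricted to A has an outcome oᵢ such that P{Z_{t+1} = oⱼ | Z_t = oᵢ} < 1 for all outcomes oⱼ. -/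
/-!
If some cell `A ∩ αᵢ` of positive mass were, up to a null set, carried by `T` into a single
cell for every `i`, these successors would define a self-map of the finite set of cells. Following
it from a cell of positive mass reaches a cycle, so some cell `C = A ∩ αᵢ₀` of positive mass
satisfies `T^[n] ⁻¹' C = C` mod 0 for some `n ≥ 1`, hence `T^[n] '' C = C` mod 0. Since a second
cell has positive mass, `μ C < μ A`, contradicting non-periodicity. Invariance of `μ` and of `A`
makes the transition probabilities independent of `t`, so it suffices to treat `t = 0`.
-/

open MeasureTheory Set Function
open scoped ENNReal

theorem Function.exists_isPeriodicPt_iterate {ι : Type*} [Finite ι] (f : ι → ι) (x : ι) :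
    ∃ a n, 0 < n ∧ IsPeriodicPt f n (f^[a] x) := by
  obtain ⟨a, b, hab, heq⟩ := Finite.exists_ne_map_eq_of_infinite fun m : ℕ => f^[m] x
  wlog hlt : a < b generalizing a b
  · exact this b a hab.symm heq.symm (hab.lt_or_gt.resolve_left hlt)
  refine ⟨a, b - a, by omega, ?_⟩
  rw [IsPeriodicPt, IsFixedPt, ← iterate_add_apply, Nat.sub_add_cancel hlt.le]
  exact heq.symm

section Measure

variable {α : Type*} [MeasurableSpace α] {μ : Measure α} {T : α → α}

theorem measurePreserving_of_measure_image_eq (hT : Surjective T) (hTm : Measurable T)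
    (hTμ : ∀ B, MeasurableSet B → μ (T '' B) = μ B) : MeasurePreserving T μ μ := by
  refine ⟨hTm, Measure.ext fun B hB => ?_⟩
  rw [Measure.map_apply hTm hB, ← hTμ _ (hTm hB), image_preimage_eq B hT]

theorem measure_image_null_of_measure_image_eq (hTμ : ∀ B, MeasurableSet B → μ (T '' B) = μ B)
    {N : Set α} (hN : μ N = 0) : μ (T '' N) = 0 :=
  measure_mono_null (image_mono (subset_toMeasurable μ N))
    ((hTμ _ (measurableSet_toMeasurable μ N)).trans ((measure_toMeasurable N).trans hN))

theorem measure_image_iterate_null_of_measure_image_eq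
    (hTμ : ∀ B, MeasurableSet B → μ (T '' B) = μ B) (n : ℕ) {N : Set α} (hN : μ N = 0) :
    μ (T^[n] '' N) = 0 := by
  induction n generalizing N with
  | zero => simpa using hN
  | succ n ih =>
    rw [iterate_succ, image_comp]
    exact ih (measure_image_null_of_measure_image_eq hTμ hN)

theorem measure_symmDiff_image_eq_zero_iff (hT : Bijective T)
    (hTq : Measure.QuasiMeasurePreserving T μ μ) (hTnull : ∀ N, μ N = 0 → μ (T '' N) = 0)
    {C : Set α} : μ (symmDiff (T '' C) C) = 0 ↔ T ⁻¹' C =ᵐ[μ] C := by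
  have hpre : T ⁻¹' symmDiff (T '' C) C = symmDiff C (T ⁻¹' C) := by
    rw [preimage_symmDiff, preimage_image_eq C hT.1]
  have himg : T '' symmDiff C (T ⁻¹' C) = symmDiff (T '' C) C := by
    rw [image_symmDiff hT.1, image_preimage_eq C hT.2]
  rw [← measure_symmDiff_eq_zero_iff, symmDiff_comm (T ⁻¹' C)]
  constructor
  · intro h
    rw [← hpre]
    exact hTq.preimage_null h
  · intro h
    rw [← himg]
    exact hTnull _ h

theorem ae_le_of_measure_le_measure_inter {s t : Set α} (hst : NullMeasurableSet (s ∩ t) μ)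
    (hs : μ s ≠ ∞) (h : μ s ≤ μ (s ∩ t)) : s ≤ᵐ[μ] t :=
  (ae_eq_of_subset_of_measure_ge inter_subset_left h hst hs).symm.le.trans
    inter_subset_right.eventuallyLE

theorem measure_lt_of_disjoint_of_pos {s t u : Set α} (hsu : s ⊆ u) (htu : t ⊆ u)
    (hst : Disjoint s t) (ht : MeasurableSet t) (ht_pos : 0 < μ t) (hu : μ u ≠ ∞) :
    μ s < μ u :=
  calc μ s < μ s + μ t := ENNReal.lt_add_right (ne_top_of_le_ne_top hu (measure_mono hsu))
          ht_pos.ne'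
    _ = μ (s ∪ t) := (measure_union hst ht).symm
    _ ≤ μ u := measure_mono (union_subset hsu htu)

theorem measure_inter_lt_of_two_pos {ι : Type*} {A : Set α} {αs : ι → Set α}
    (hαdisj : ∀ i j, i ≠ j → Disjoint (αs i) (αs j)) (hαm : ∀ i, MeasurableSet (αs i))
    (hA : MeasurableSet A) (hAfin : μ A ≠ ∞) {k₁ k₂ : ι} (hk : k₁ ≠ k₂)
    (hk₁ : 0 < μ (A ∩ αs k₁)) (hk₂ : 0 < μ (A ∩ αs k₂)) (i : ι) : μ (A ∩ αs i) < μ A := by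
  obtain ⟨k, hki, hk_pos⟩ : ∃ k, k ≠ i ∧ 0 < μ (A ∩ αs k) := by
    by_cases h : k₁ = i
    · exact ⟨k₂, fun h' => hk (h.trans h'.symm), hk₂⟩
    · exact ⟨k₁, h, hk₁⟩
  exact measure_lt_of_disjoint_of_pos inter_subset_left inter_subset_left
    ((hαdisj _ _ hki.symm).mono inter_subset_right inter_subset_right) (hA.inter (hαm k)) hk_pos
    hAfin

theorem ae_le_preimage_inter_of_measure_le {A s t : Set α} (hAT : T ⁻¹' A =ᵐ[μ] A) (hsA : s ⊆ A)
    (hst : NullMeasurableSet (s ∩ T ⁻¹' t) μ) (hs : μ s ≠ ∞) (h : μ s ≤ μ (s ∩ T ⁻¹' t)) :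
    s ≤ᵐ[μ] T ⁻¹' (A ∩ t) := by
  rw [preimage_inter, ← inter_self s]
  exact ae_le_set_inter (hsA.eventuallyLE.trans hAT.symm.le)
    (ae_le_of_measure_le_measure_inter hst hs h)

namespace MeasureTheory.MeasurePreserving

theorem measure_inter_preimage_of_preimage_ae_eq (hT : MeasurePreserving T μ μ) {A S : Set α}
    (hA : NullMeasurableSet A μ) (hAT : T ⁻¹' A =ᵐ[μ] A) (hS : NullMeasurableSet S μ) :
    μ (A ∩ T ⁻¹' S) = μ (A ∩ S) :=
  calc μ (A ∩ T ⁻¹' S) = μ (T ⁻¹' (A ∩ S)) := by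
        rw [preimage_inter]
        exact measure_congr (hAT.symm.inter (ae_eq_refl _))
    _ = μ (A ∩ S) := hT.measure_preimage (hA.inter hS)

theorem measure_inter_preimage_iterate_of_preimage_ae_eq (hT : MeasurePreserving T μ μ)
    {A S : Set α} (hA : NullMeasurableSet A μ) (hAT : T ⁻¹' A =ᵐ[μ] A) (t : ℕ)
    (hS : NullMeasurableSet S μ) : μ (A ∩ T^[t] ⁻¹' S) = μ (A ∩ S) :=
  (hT.iterate t).measure_inter_preimage_of_preimage_ae_eq hA
    (hT.quasiMeasurePreserving.preimage_iterate_ae_eq t hAT) hS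

theorem measure_inter_preimage_iterate_inter_preimage_succ (hT : MeasurePreserving T μ μ)
    {A S S' : Set α} (hA : NullMeasurableSet A μ) (hAT : T ⁻¹' A =ᵐ[μ] A) (t : ℕ)
    (hS : NullMeasurableSet S μ) (hS' : NullMeasurableSet S' μ) :
    μ (A ∩ T^[t] ⁻¹' S ∩ T^[t + 1] ⁻¹' S') = μ (A ∩ S ∩ T ⁻¹' S') := by
  rw [iterate_succ', preimage_comp, inter_assoc, ← preimage_inter, inter_assoc,
    hT.measure_inter_preimage_iterate_of_preimage_ae_eq hA hAT t
      (hS.inter (hS'.preimage hT.quasiMeasurePreserving))]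

variable [IsFiniteMeasure μ]

theorem preimage_ae_eq_of_ae_le (hT : MeasurePreserving T μ μ) {s : Set α}
    (hs : NullMeasurableSet s μ) (h : s ≤ᵐ[μ] T ⁻¹' s) : T ⁻¹' s =ᵐ[μ] s :=
  (ae_eq_of_ae_subset_of_measure_ge h (hT.measure_preimage hs).le hs (measure_ne_top μ _)).symm

theorem exists_iterate_preimage_ae_eq_of_ae_le_preimage {ι : Type*} [Finite ι]
    (hT : MeasurePreserving T μ μ) {D : ι → Set α} (hD : ∀ i, NullMeasurableSet (D i) μ)
    (f : ι → ι) (hf : ∀ i, D i ≤ᵐ[μ] T ⁻¹' D (f i)) (i₁ : ι) :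
    ∃ i₀ n, 1 ≤ n ∧ μ (D i₁) ≤ μ (D i₀) ∧ T^[n] ⁻¹' D i₀ =ᵐ[μ] D i₀ := by
  have hiter : ∀ m i, D i ≤ᵐ[μ] T^[m] ⁻¹' D (f^[m] i) := by
    intro m
    induction m with
    | zero => exact fun i => Filter.EventuallyLE.refl _ _
    | succ m ih =>
      intro i
      rw [iterate_succ_apply, iterate_succ, preimage_comp]
      exact (hf i).trans (hT.quasiMeasurePreserving.preimage_mono_ae (ih (f i)))
  obtain ⟨a, n, hn, hper⟩ := exists_isPeriodicPt_iterate f i₁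
  refine ⟨f^[a] i₁, n, hn, ?_, ?_⟩
  · exact (measure_mono_ae (hiter a i₁)).trans_eq ((hT.iterate a).measure_preimage (hD _))
  · have hret := hiter n (f^[a] i₁)
    rw [hper.eq] at hret
    exact (hT.iterate n).preimage_ae_eq_of_ae_le (hD _) hret

end MeasureTheory.MeasurePreserving

end Measure

theorem stmt18_general {M : Type*} [MeasurableSpace M]
    (μ : Measure M) [IsProbabilityMeasure μ]
    (T : M → M) (hTbij : Function.Bijective T) (hTmeas : Measurable T)
    (hTpres : ∀ B : Set M, MeasurableSet B → μ (T '' B) = μ B)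
    (A : Set M) (hA : MeasurableSet A)
    -- T maps A onto A up to measure zero
    (hAinv : μ (symmDiff (T '' A) A) = 0)
    -- ... with no set C, 0 < μ_A(C) < 1, satisfying T_Aⁿ(C) = C up to measure zero
    (hnoper : ¬ ∃ (n : ℕ) (C : Set M), 1 ≤ n ∧ MeasurableSet C ∧ C ⊆ A ∧
      0 < μ C ∧ μ C < μ A ∧ μ (symmDiff (T^[n] '' C) C) = 0)
    -- a finite-valued observation function Φ = Σᵢ oᵢ χ_{αᵢ}
    (k : ℕ) (αs : Fin k → Set M)
    (hαmeas : ∀ i, MeasurableSet (αs i))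
    (hαdisj : ∀ i j, i ≠ j → Disjoint (αs i) (αs j))
    -- at least two cells of the partition meet A in positive measure
    (htwo : ∃ k₁ k₂ : Fin k, k₁ ≠ k₂ ∧ 0 < μ (A ∩ αs k₁) ∧ 0 < μ (A ∩ αs k₂)) :
    -- there is an outcome oᵢ with P{Z_{t+1} = oⱼ | Z_t = oᵢ} < 1 for all j,
    -- for the process Z_t = Φ(Tᵗ) restricted to A
    ∃ i : Fin k, ∀ t : ℕ,
      0 < μ (A ∩ T^[t] ⁻¹' (αs i)) ∧
      ∀ j : Fin k,
        μ (A ∩ T^[t] ⁻¹' (αs i) ∩ T^[t + 1] ⁻¹' (αs j))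
          < μ (A ∩ T^[t] ⁻¹' (αs i)) := by
  have hT : MeasurePreserving T μ μ := measurePreserving_of_measure_image_eq hTbij.2 hTmeas hTpres
  have hAT : T ⁻¹' A =ᵐ[μ] A := (measure_symmDiff_image_eq_zero_iff hTbij hT.quasiMeasurePreserving
    (fun _ => measure_image_null_of_measure_image_eq hTpres)).1 hAinv
  have hA₀ : NullMeasurableSet A μ := hA.nullMeasurableSet
  suffices ∃ i, 0 < μ (A ∩ αs i) ∧ ∀ j, μ (A ∩ αs i ∩ T ⁻¹' αs j) < μ (A ∩ αs i) by
    obtain ⟨i, hpos, hlt⟩ := this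
    refine ⟨i, fun t => ?_⟩
    simp only [hT.measure_inter_preimage_iterate_of_preimage_ae_eq hA₀ hAT t
      (hαmeas _).nullMeasurableSet, hT.measure_inter_preimage_iterate_inter_preimage_succ hA₀ hAT t
      (hαmeas _).nullMeasurableSet (hαmeas _).nullMeasurableSet]
    exact ⟨hpos, hlt⟩
  by_contra! hfull
  -- a null cell may be given any successor
  have hsucc : ∀ i, ∃ j, (A ∩ αs i : Set M) ≤ᵐ[μ] T ⁻¹' (A ∩ αs j) := by
    intro i
    rcases eq_zero_or_pos (μ (A ∩ αs i)) with hnull | hpos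
    · exact ⟨i, ae_le_set.2 (measure_mono_null sdiff_subset hnull)⟩
    obtain ⟨j, hj⟩ := hfull i hpos
    exact ⟨j, ae_le_preimage_inter_of_measure_le hAT inter_subset_left
      ((hA.inter (hαmeas i)).inter (hTmeas (hαmeas j))).nullMeasurableSet (measure_ne_top _ _) hj⟩
  choose f hf using hsucc
  obtain ⟨k₁, k₂, hk, hk₁, hk₂⟩ := htwo
  obtain ⟨i₀, n, hn, hle, hper⟩ := hT.exists_iterate_preimage_ae_eq_of_ae_le_preimage
    (fun i => (hA.inter (hαmeas i)).nullMeasurableSet) f hf k₁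
  refine hnoper ⟨n, A ∩ αs i₀, hn, hA.inter (hαmeas i₀), inter_subset_left, hk₁.trans_le hle,
    measure_inter_lt_of_two_pos hαdisj hαmeas hA (measure_ne_top _ _) hk hk₁ hk₂ i₀, ?_⟩
  exact (measure_symmDiff_image_eq_zero_iff (hTbij.iterate n) (hT.iterate n).quasiMeasurePreserving
    (fun _ => measure_image_iterate_null_of_measure_image_eq hTpres n)).2 hper

theorem stmt18 {M MO : Type*} [MeasurableSpace M] [MeasurableSpace MO]
    (μ : Measure M) [IsProbabilityMeasure μ]
    (T : M → M) (hTbij : Function.Bijective T) (hTmeas : Measurable T)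
    (hTpres : ∀ B : Set M, MeasurableSet B → μ (T '' B) = μ B)
    (A : Set M) (hA : MeasurableSet A) (hApos : 0 < μ A)
    -- T maps A onto A up to measure zero
    (hAinv : μ (symmDiff (T '' A) A) = 0)
    -- the restricted system (A, μ_A, T_A) is ergodic ...
    (herg : ∀ C : Set M, MeasurableSet C → C ⊆ A →
      μ (symmDiff (T '' C) C) = 0 → μ C = 0 ∨ μ C = μ A)
    -- ... with no set C, 0 < μ_A(C) < 1, satisfying T_Aⁿ(C) = C up to measure zero
    (hnoper : ¬ ∃ (n : ℕ) (C : Set M), 1 ≤ n ∧ MeasurableSet C ∧ C ⊆ A ∧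
      0 < μ C ∧ μ C < μ A ∧ μ (symmDiff (T^[n] '' C) C) = 0)
    -- a finite-valued observation function Φ = Σᵢ oᵢ χ_{αᵢ}
    (k : ℕ) (αs : Fin k → Set M) (o : Fin k → MO) (Φ : M → MO)
    (hαmeas : ∀ i, MeasurableSet (αs i))
    (hαdisj : ∀ i j, i ≠ j → Disjoint (αs i) (αs j))
    (hαcover : (⋃ i, αs i) = univ)
    (ho : Function.Injective o)
    (hΦ : ∀ i, ∀ m ∈ αs i, Φ m = o i)
    -- at least two cells of the partition meet A in positive measure
    (htwo : ∃ k₁ k₂ : Fin k, k₁ ≠ k₂ ∧ 0 < μ (A ∩ αs k₁) ∧ 0 < μ (A ∩ αs k₂)) :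
    -- there is an outcome oᵢ with P{Z_{t+1} = oⱼ | Z_t = oᵢ} < 1 for all j,
    -- for the process Z_t = Φ(Tᵗ) restricted to A
    ∃ i : Fin k, ∀ t : ℕ,
      0 < μ (A ∩ T^[t] ⁻¹' (αs i)) ∧
      ∀ j : Fin k,
        μ (A ∩ T^[t] ⁻¹' (αs i) ∩ T^[t + 1] ⁻¹' (αs j))
          < μ (A ∩ T^[t] ⁻¹' (αs i)) :=
  stmt18_general μ T hTbij hTmeas hTpres A hA hAinv hnoper k αs hαmeas hαdisj htwo
end

section
/- Let (M, Σ, μ, T) be an ergodic measure-preserving system and α = {α₁,...,αₙ} a finite partition into sets of positive measure such that for every i there exists j with T(αᵢ) ⊆ αⱼ up to measure zero. Then: (a) if for every i the inclusion is an equality up to measure zero, there exist n ∈ ℕ and C ∈ Σ with 0 < μ(C) < 1 and Tⁿ(C) = C up to measure zero; (b) it cannot happen that for some i there is j with T(αᵢ) ⊂ αⱼ up to measure zero and μ(αᵢ) < μ(αⱼ). -/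
/-!
(a) If `T '' αᵢ = α_{f i}` mod 0, then `T^[k] '' αᵢ = α_{f^[k] i}` mod 0 for all `k`; a periodic
point `i` of the self-map `f` of the finite index set gives a set `αᵢ` fixed mod 0 by some `T^[k]`,
and `μ αᵢ < 1` because there is a second piece of positive measure.

(b) Complete the given inclusion `T '' αᵢ ⊆ αⱼ` to a map `f` with `T '' αᵢ ⊆ α_{f i}` mod 0 for all
`i`. Measure preservation bounds the total measure of the fibre `f⁻¹ {j}` by `μ αⱼ`; summing over
`j` gives equality, so every bound is sharp, every fibre is nonempty, `f` is a bijection and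
`μ αᵢ = μ α_{f i}`.
-/

open MeasureTheory Set Function Finset

section FiberSums

variable {ι β : Type*} [Fintype ι] [DecidableEq ι] [AddCommMonoid β] [PartialOrder β]
  [IsOrderedCancelAddMonoid β] {f : ι → ι} {ν : ι → β}

theorem sum_fiber_eq_of_sum_fiber_le (h : ∀ j, ∑ i ∈ univ with f i = j, ν i ≤ ν j) (j : ι) :
    ∑ i ∈ univ with f i = j, ν i = ν j :=
  (sum_eq_sum_iff_of_le fun j _ ↦ h j).1 (sum_fiberwise univ f ν) j (mem_univ j)

theorem apply_eq_of_sum_fiber_le (hpos : ∀ j, 0 < ν j)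
    (h : ∀ j, ∑ i ∈ univ with f i = j, ν i ≤ ν j) (i : ι) : ν (f i) = ν i := by
  have hsurj : Surjective f := by
    intro j
    by_contra! hj
    have hempty : ({i ∈ univ | f i = j} : Finset ι) = ∅ := filter_eq_empty_iff.2 fun i _ ↦ hj i
    have := sum_fiber_eq_of_sum_fiber_le h j
    rw [hempty, sum_empty] at this
    exact (hpos j).ne this
  have hfiber : ({i' ∈ univ | f i' = f i} : Finset ι) = {i} := by
    ext i'
    simpa using (Finite.injective_iff_surjective.2 hsurj).eq_iff (a := i') (b := i)
  rw [← sum_fiber_eq_of_sum_fiber_le h, hfiber, sum_singleton]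

end FiberSums

theorem Function.exists_isPeriodicPt_of_finite {α : Type*} [Finite α] [Nonempty α] (f : α → α) :
    ∃ x n, 0 < n ∧ IsPeriodicPt f n x := by
  obtain ⟨a, b, hne, heq⟩ :=
    Finite.exists_ne_map_eq_of_infinite fun m : ℕ ↦ f^[m] (Classical.arbitrary α)
  wlog hab : a < b generalizing a b
  · exact this b a hne.symm heq.symm (hne.lt_or_gt.resolve_left hab)
  refine ⟨f^[a] (Classical.arbitrary α), b - a, by omega, ?_⟩
  simp only [IsPeriodicPt, IsFixedPt, ← iterate_add_apply, Nat.sub_add_cancel hab.le]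
  exact heq.symm

theorem measure_lt_one_of_disjoint {M : Type*} [MeasurableSpace M] {μ : Measure M}
    [IsProbabilityMeasure μ] {s t : Set M} (hst : Disjoint s t) (ht : MeasurableSet t)
    (ht0 : 0 < μ t) : μ s < 1 :=
  calc μ s ≤ μ tᶜ := measure_mono hst.subset_compl_right
    _ = 1 - μ t := prob_compl_eq_one_sub ht
    _ < 1 := ENNReal.sub_lt_self ENNReal.one_ne_top one_ne_zero ht0.ne'

section ImagePreserving

variable {M ι : Type*} [MeasurableSpace M] {μ : Measure M} {T : M → M}
  (hT : ∀ B : Set M, MeasurableSet B → μ (T '' B) = μ B) {α : ι → Set M}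
include hT

theorem measure_image_eq_zero_of_measure_image_eq {N : Set M} (hN : μ N = 0) :
    μ (T '' N) = 0 :=
  measure_mono_null (image_mono (subset_toMeasurable μ N))
    (by rw [hT _ (measurableSet_toMeasurable μ N), measure_toMeasurable, hN])

theorem image_ae_eq_image_of_measure_image_eq (hinj : Injective T) {s t : Set M}
    (h : s =ᵐ[μ] t) : T '' s =ᵐ[μ] T '' t := by
  rw [← measure_symmDiff_eq_zero_iff, ← image_symmDiff hinj] at *
  exact measure_image_eq_zero_of_measure_image_eq hT h

theorem iterate_image_ae_eq_of_image_ae_eq (hinj : Injective T) {f : ι → ι}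
    (hf : ∀ i, T '' α i =ᵐ[μ] α (f i)) (k : ℕ) (i : ι) :
    T^[k] '' α i =ᵐ[μ] α (f^[k] i) := by
  induction k with
  | zero => simp only [iterate_zero, image_id, id_eq]; exact Filter.EventuallyEq.rfl
  | succ k ih =>
    rw [iterate_succ', Set.image_comp, iterate_succ_apply']
    exact (image_ae_eq_image_of_measure_image_eq hT hinj ih).trans (hf _)

theorem exists_iterate_image_ae_eq_self [Finite ι] [Nonempty ι] (hinj : Injective T)
    {f : ι → ι} (hf : ∀ i, T '' α i =ᵐ[μ] α (f i)) :
    ∃ i, ∃ k, 0 < k ∧ T^[k] '' α i =ᵐ[μ] α i := by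
  obtain ⟨i, k, hk, hper⟩ := exists_isPeriodicPt_of_finite f
  refine ⟨i, k, hk, ?_⟩
  simpa only [hper.eq] using iterate_image_ae_eq_of_image_ae_eq hT hinj hf k i

variable [IsFiniteMeasure μ] (hmeas : ∀ i, MeasurableSet (α i))
  (hdisj : Pairwise (Disjoint on α))
include hmeas hdisj

theorem sum_measureReal_le_of_image_ae_le (s : Finset ι) {j : ι}
    (h : ∀ i ∈ s, T '' α i ≤ᵐ[μ] α j) : ∑ i ∈ s, μ.real (α i) ≤ μ.real (α j) := by
  have himage : T '' ⋃ i ∈ s, α i ≤ᵐ[μ] α j := by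
    rw [image_iUnion₂]
    filter_upwards [(s.eventually_all).2 h] with x hx hxU
    obtain ⟨i, hi, hxi⟩ := mem_iUnion₂.1 hxU
    exact hx i hi hxi
  calc ∑ i ∈ s, μ.real (α i) = μ.real (⋃ i ∈ s, α i) :=
        (measureReal_biUnion_finset (hdisj.set_pairwise _) fun i _ ↦ hmeas i).symm
    _ = μ.real (T '' ⋃ i ∈ s, α i) := by
        rw [measureReal_def, measureReal_def, hT _ (s.measurableSet_biUnion fun i _ ↦ hmeas i)]
    _ ≤ μ.real (α j) := ENNReal.toReal_mono (measure_ne_top μ _) (measure_mono_ae himage)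

theorem measure_eq_of_image_ae_le [Fintype ι] (hpos : ∀ i, 0 < μ (α i))
    (hsub : ∀ i, ∃ j, T '' α i ≤ᵐ[μ] α j) {i j : ι} (hij : T '' α i ≤ᵐ[μ] α j) :
    μ (α i) = μ (α j) := by
  classical
  choose f₀ hf₀ using hsub
  set f := update f₀ i j
  have hf : ∀ i', T '' α i' ≤ᵐ[μ] α (f i') := by
    intro i'
    rcases eq_or_ne i' i with rfl | hi'
    · simpa [f] using hij
    · simpa [f, hi'] using hf₀ i'
  have hfiber (j' : ι) : ∑ i' ∈ univ with f i' = j', μ.real (α i') ≤ μ.real (α j') :=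
    sum_measureReal_le_of_image_ae_le hT hmeas hdisj _ fun i' hi' ↦
      (mem_filter.1 hi').2 ▸ hf i'
  have hreal := apply_eq_of_sum_fiber_le (ν := fun i ↦ μ.real (α i))
    (fun i ↦ ENNReal.toReal_pos (hpos i).ne' (measure_ne_top μ _)) hfiber i
  simp only [f, update_self] at hreal
  exact ((measureReal_eq_measureReal_iff).1 hreal).symm

end ImagePreserving

theorem stmt19_general {M : Type*} [MeasurableSpace M]
    (μ : Measure M) [IsProbabilityMeasure μ]
    (T : M → M) (hTbij : Function.Bijective T)
    (hTpres : ∀ B : Set M, MeasurableSet B → μ (T '' B) = μ B)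
    (n : ℕ) (hn : 2 ≤ n) (α : Fin n → Set M)
    (hαmeas : ∀ i, MeasurableSet (α i)) (hαpos : ∀ i, 0 < μ (α i))
    (hαdisj : ∀ i j, i ≠ j → Disjoint (α i) (α j))
    -- for every i there is j with T(αᵢ) ⊆ αⱼ up to measure zero
    (hsub : ∀ i, ∃ j, μ (T '' α i \ α j) = 0) :
    -- (a) if each inclusion is an equality mod 0, there is a periodic set
    ((∀ i, ∃ j, μ (symmDiff (T '' α i) (α j)) = 0) →
      ∃ (k : ℕ) (C : Set M), 1 ≤ k ∧ MeasurableSet C ∧ 0 < μ C ∧ μ C < 1 ∧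
        μ (symmDiff (T^[k] '' C) C) = 0) ∧
    -- (b) no strict inclusion mod 0 with strictly smaller measure can occur
    (¬ ∃ i j, μ (T '' α i \ α j) = 0 ∧ μ (α i) < μ (α j)) := by
  have : Nontrivial (Fin n) := Fin.nontrivial_iff_two_le.2 hn
  refine ⟨fun heq ↦ ?_, ?_⟩
  · choose f hf using heq
    obtain ⟨i, k, hk, hper⟩ := exists_iterate_image_ae_eq_self hTpres hTbij.injective
      fun i ↦ measure_symmDiff_eq_zero_iff.1 (hf i)
    obtain ⟨j, hji⟩ := exists_ne i
    exact ⟨k, α i, hk, hαmeas i, hαpos i,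
      measure_lt_one_of_disjoint (hαdisj i j hji.symm) (hαmeas j) (hαpos j),
      measure_symmDiff_eq_zero_iff.2 hper⟩
  · rintro ⟨i, j, hij, hlt⟩
    exact hlt.ne (measure_eq_of_image_ae_le hTpres hαmeas (fun i j ↦ hαdisj i j) hαpos
      (fun i ↦ (hsub i).imp fun _ ↦ ae_le_set.2) (ae_le_set.2 hij))

theorem stmt19 {M : Type*} [MeasurableSpace M]
    (μ : Measure M) [IsProbabilityMeasure μ]
    (T : M → M) (hTbij : Function.Bijective T) (hTmeas : Measurable T)
    (hTpres : ∀ B : Set M, MeasurableSet B → μ (T '' B) = μ B)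
    -- ergodicity: any two sets of positive measure eventually meet
    (herg : ∀ A B : Set M, MeasurableSet A → MeasurableSet B →
      0 < μ A → 0 < μ B → ∃ k : ℕ, 1 ≤ k ∧ 0 < μ (T^[k] '' A ∩ B))
    (n : ℕ) (hn : 2 ≤ n) (α : Fin n → Set M)
    (hαmeas : ∀ i, MeasurableSet (α i)) (hαpos : ∀ i, 0 < μ (α i))
    (hαdisj : ∀ i j, i ≠ j → Disjoint (α i) (α j))
    (hαcover : (⋃ i, α i) = univ)
    -- for every i there is j with T(αᵢ) ⊆ αⱼ up to measure zero
    (hsub : ∀ i, ∃ j, μ (T '' α i \ α j) = 0) :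
    -- (a) if each inclusion is an equality mod 0, there is a periodic set
    ((∀ i, ∃ j, μ (symmDiff (T '' α i) (α j)) = 0) →
      ∃ (k : ℕ) (C : Set M), 1 ≤ k ∧ MeasurableSet C ∧ 0 < μ C ∧ μ C < 1 ∧
        μ (symmDiff (T^[k] '' C) C) = 0) ∧
    -- (b) no strict inclusion mod 0 with strictly smaller measure can occur
    (¬ ∃ i j, μ (T '' α i \ α j) = 0 ∧ μ (α i) < μ (α j)) :=
  stmt19_general μ T hTbij hTpres n hn α hαmeas hαpos hαdisj hsub
end
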